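/- arXiv:1310.7654 — 5 statements merged into one kernel-verified Lean document; each statement's English description precedes it below -/
import Mathlib

section
/- Let x = (x_i)_{i∈[n]} be a Nash equilibrium of an n-player m-action game and let ε, α ∈ (0,1). If k > 8(ln m + ln n − ln α − ln ε + ln 8)/ε², then the product empirical distribution of play ∏_{i∈[n]} s_i^k, formed from k i.i.d. samples from x, is an ε-Nash equilibrium with probability greater than 1 − α. -/
open Finset

open scoped Classical

noncomputable section

/-- `x` is a probability distribution on the finite type `A`. -/
def IsDist {A : Type*} [Fintype A] (x : A → ℝ) : Prop :=
  (∀ a, 0 ≤ x a) ∧ ∑ a, x a = 1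

/-- Probability of the pure action profile `a` under the product distribution `x`. -/
def prodProb {n m : ℕ} (x : Fin n → Fin m → ℝ) (a : Fin n → Fin m) : ℝ :=
  ∏ i, x i (a i)

/-- Expected utility of the payoff function `u` under the product distribution `x`. -/
def EU {n m : ℕ} (u : (Fin n → Fin m) → ℝ) (x : Fin n → Fin m → ℝ) : ℝ :=
  ∑ a, prodProb x a * u a

/-- The point mass (pure strategy) at action `b`. -/
def pureStrat {m : ℕ} (b : Fin m) : Fin m → ℝ := fun c => if c = b then 1 else 0

/-- `x` is an `ε`-Nash equilibrium of the game `u`: no player gains more than `ε`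
by deviating to any pure action. -/
def IsNash {n m : ℕ} (u : Fin n → (Fin n → Fin m) → ℝ) (x : Fin n → Fin m → ℝ)
    (ε : ℝ) : Prop :=
  ∀ (i : Fin n) (b : Fin m),
    EU (u i) x ≥ EU (u i) (Function.update x i (pureStrat b)) - ε

/-- Empirical distribution of player `i` given `k` sampled action profiles. -/
def emp {n m : ℕ} (k : ℕ) (a : Fin k → Fin n → Fin m) (i : Fin n) : Fin m → ℝ :=
  fun b => ((univ.filter fun t => a t i = b).card : ℝ) / k

/-- Probability of the event `E` over `k` i.i.d. samples from the product distribution `x`. -/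
def PrProd {n m : ℕ} (k : ℕ) (x : Fin n → Fin m → ℝ)
    (E : (Fin k → Fin n → Fin m) → Prop) : ℝ :=
  ∑ a : Fin k → Fin n → Fin m, if E a then ∏ t, prodProb x (a t) else 0

/-! The expected payoffs `EU h (emp k a)` under the product empirical distribution are
V-statistics of the `k` samples, not sample means. Shifting the sample sequence of each player `j`
cyclically by `c j` preserves the law of the samples, and averaging over all shifts `c` writes the
V-statistic as an average of ordinary sample means of shifted samples (Hoeffding's decomposition).
Convexity of `exp` and Hoeffding's lemma then give the sub-Gaussian bound
`E[exp (s (EU h (emp k a) - EU h x))] ≤ exp (s² / 8k)`, so each of the `n (m + 1)` payoffs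
`u i` and `u i (b, ·)` deviates from its mean by `ε / 2` with probability at most
`2 exp (-k ε² / 2)`. Off these events the Nash inequalities for `x` pass to the empirical
distribution with loss `ε`, and the union bound together with the bound on `k` gives the claim. -/

open MeasureTheory ProbabilityTheory in
lemma sum_mul_exp_mul_sub_le_of_mem_Icc {ι : Type*} [Fintype ι] (w h : ι → ℝ) (hw0 : ∀ p, 0 ≤ w p)
    (hw1 : ∑ p, w p = 1) (hh : ∀ p, h p ∈ Set.Icc (0 : ℝ) 1) (s : ℝ) :
    ∑ p, w p * Real.exp (s * (h p - ∑ q, w q * h q)) ≤ Real.exp (s ^ 2 / 8) := by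
  let _ : MeasurableSpace ι := ⊤
  have : DiscreteMeasurableSpace ι := ⟨fun _ => trivial⟩
  let P : PMF ι := PMF.ofFintype (fun p => ENNReal.ofReal (w p)) (by
    rw [← ENNReal.ofReal_sum_of_nonneg fun p _ => hw0 p, hw1, ENNReal.ofReal_one])
  have hint : ∀ f : ι → ℝ, ∫ p, f p ∂P.toMeasure = ∑ p, w p * f p := fun f => by
    simp [P, PMF.integral_eq_sum, ENNReal.toReal_ofReal (hw0 _)]
  have := (hasSubgaussianMGF_of_mem_Icc (X := h) (μ := P.toMeasure) (a := 0) (b := 1)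
    (by fun_prop) (ae_of_all _ hh)).mgf_le s
  simp only [mgf, hint] at this
  convert this using 2
  norm_num; ring

variable {n m k : ℕ}

lemma EU_eq_sum_funSplitAt (u : (Fin n → Fin m) → ℝ) (s : Fin n → Fin m → ℝ) (i : Fin n) :
    EU u s = ∑ c, s i c * ∑ r : {j // j ≠ i} → Fin m,
      (∏ j : {j // j ≠ i}, s j (r j)) * u ((Equiv.funSplitAt i (Fin m)).symm (c, r)) := by
  unfold EU prodProb
  rw [← (Equiv.funSplitAt i (Fin m)).symm.sum_comp, Fintype.sum_prod_type]
  refine Finset.sum_congr rfl fun c _ => ?_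
  rw [Finset.mul_sum]
  refine Finset.sum_congr rfl fun r _ => ?_
  rw [Fintype.prod_eq_mul_prod_subtype_ne _ i]
  have hr : ∀ j : {j // j ≠ i}, (Equiv.funSplitAt i (Fin m)).symm (c, r) j = r j :=
    fun j => by simp [j.prop]
  simp [hr, mul_assoc]

lemma update_funSplitAt_symm (i : Fin n) (c b : Fin m) (r : {j // j ≠ i} → Fin m) :
    Function.update ((Equiv.funSplitAt i (Fin m)).symm (c, r)) i b =
      (Equiv.funSplitAt i (Fin m)).symm (b, r) := by
  funext j
  by_cases hj : j = i
  · subst hj; simp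
  · simp [hj]

lemma EU_update_pureStrat (u : (Fin n → Fin m) → ℝ) (s : Fin n → Fin m → ℝ) (i : Fin n)
    (b : Fin m) (hs : ∑ c, s i c = 1) :
    EU u (Function.update s i (pureStrat b)) = EU (fun a => u (Function.update a i b)) s := by
  rw [EU_eq_sum_funSplitAt _ _ i, EU_eq_sum_funSplitAt _ _ i]
  simp only [Function.update_self, update_funSplitAt_symm, ← Finset.sum_mul, hs, one_mul, pureStrat]
  have hs' : ∀ j : {j // j ≠ i}, Function.update s i (pureStrat b) j = s j :=
    fun j => Function.update_of_ne j.prop _ _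
  simp [hs']

lemma sum_emp [NeZero k] (a : Fin k → Fin n → Fin m) (i : Fin n) : ∑ b, emp k a i b = 1 := by
  simp only [emp, ← Finset.sum_div, ← Nat.cast_sum, ← Finset.card_eq_sum_card_fiberwise
    (fun t _ => Finset.mem_univ (a t i)), Finset.card_univ, Fintype.card_fin]
  exact div_self (Nat.cast_ne_zero.2 (NeZero.ne k))

def deviationPayoff (u : Fin n → (Fin n → Fin m) → ℝ) :
    Fin n × Option (Fin m) → (Fin n → Fin m) → ℝ
  | (i, none) => u i
  | (i, some b) => fun a => u i (Function.update a i b)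

lemma deviationPayoff_mem_Icc {u : Fin n → (Fin n → Fin m) → ℝ}
    (hu : ∀ i a, 0 ≤ u i a ∧ u i a ≤ 1) (q : Fin n × Option (Fin m)) (a : Fin n → Fin m) :
    deviationPayoff u q a ∈ Set.Icc (0 : ℝ) 1 := by
  obtain ⟨i, _ | b⟩ := q
  exacts [hu i a, hu i _]

lemma IsNash.of_abs_EU_deviationPayoff_sub_lt {u : Fin n → (Fin n → Fin m) → ℝ}
    {x y : Fin n → Fin m → ℝ} {ε δ : ℝ} (hx : IsNash u x ε) (hx1 : ∀ i, ∑ c, x i c = 1)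
    (hy1 : ∀ i, ∑ c, y i c = 1)
    (hxy : ∀ q, |EU (deviationPayoff u q) y - EU (deviationPayoff u q) x| < δ) :
    IsNash u y (ε + 2 * δ) := by
  intro i b
  have hxb := hx i b
  have hstay := abs_lt.1 (hxy (i, none))
  have hdev := abs_lt.1 (hxy (i, some b))
  rw [ge_iff_le, EU_update_pureStrat _ _ _ _ (hx1 i)] at hxb
  rw [ge_iff_le, EU_update_pureStrat _ _ _ _ (hy1 i)]
  simp only [deviationPayoff] at hstay hdev
  linarith

-- Addition in `Fin k` is modulo `k`, so each player's sample sequence is rotated cyclically.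
def shiftSamples (c : Fin n → Fin k) (a : Fin k → Fin n → Fin m) : Fin k → Fin n → Fin m :=
  fun t j => a (t + c j) j

lemma prodProb_emp_mul_pow [NeZero k] (a : Fin k → Fin n → Fin m) (p : Fin n → Fin m) :
    prodProb (emp k a) p * (k : ℝ) ^ n =
      ∑ r : Fin n → Fin k, if (fun j => a (r j) j) = p then 1 else 0 := by
  have hk : (k : ℝ) ≠ 0 := Nat.cast_ne_zero.2 (NeZero.ne k)
  have hcount : ∀ j, emp k a j (p j) * k = ∑ t, if a t j = p j then (1 : ℝ) else 0 := fun j => by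
    simp [emp, hk, Finset.sum_boole]
  rw [prodProb, ← Fin.prod_const n (k : ℝ), ← Finset.prod_mul_distrib,
    Finset.prod_congr rfl fun j _ => hcount j, Finset.prod_univ_sum]
  simp [funext_iff, Finset.prod_boole]

lemma EU_emp_mul_pow [NeZero k] (h : (Fin n → Fin m) → ℝ) (a : Fin k → Fin n → Fin m) :
    EU h (emp k a) * (k : ℝ) ^ n = ∑ r : Fin n → Fin k, h (fun j => a (r j) j) := by
  simp only [EU, Finset.sum_mul, mul_right_comm _ (h _), prodProb_emp_mul_pow]
  rw [Finset.sum_comm]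
  simp

lemma sum_shiftSamples_apply [NeZero k] (h : (Fin n → Fin m) → ℝ) (a : Fin k → Fin n → Fin m)
    (t : Fin k) :
    ∑ c : Fin n → Fin k, h (shiftSamples c a t) = EU h (emp k a) * (k : ℝ) ^ n := by
  rw [EU_emp_mul_pow]
  exact Fintype.sum_equiv (Equiv.piCongrRight fun _ => Equiv.addLeft t) _ _ fun c => rfl

lemma EU_emp_eq_average_shiftSamples [NeZero k] (h : (Fin n → Fin m) → ℝ)
    (a : Fin k → Fin n → Fin m) :
    EU h (emp k a) =
      ∑ c : Fin n → Fin k, ((k : ℝ) ^ n)⁻¹ * ((k : ℝ)⁻¹ * ∑ t, h (shiftSamples c a t)) := by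
  have hk : (k : ℝ) ≠ 0 := Nat.cast_ne_zero.2 (NeZero.ne k)
  simp only [← Finset.mul_sum]
  rw [Finset.sum_comm]
  simp only [sum_shiftSamples_apply, Finset.sum_const, Finset.card_univ, Fintype.card_fin,
    nsmul_eq_mul]
  field_simp

def EProd (k : ℕ) (x : Fin n → Fin m → ℝ) (f : (Fin k → Fin n → Fin m) → ℝ) : ℝ :=
  ∑ a : Fin k → Fin n → Fin m, (∏ t, prodProb x (a t)) * f a

section EProd

variable {x : Fin n → Fin m → ℝ}

lemma prodProb_nonneg (hx : ∀ i c, 0 ≤ x i c) (p : Fin n → Fin m) : 0 ≤ prodProb x p :=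
  Finset.prod_nonneg fun i _ => hx i (p i)

lemma EProd_mono (hx : ∀ i c, 0 ≤ x i c) {f g : (Fin k → Fin n → Fin m) → ℝ}
    (hfg : ∀ a, f a ≤ g a) : EProd k x f ≤ EProd k x g :=
  Finset.sum_le_sum fun a _ => mul_le_mul_of_nonneg_left (hfg a)
    (Finset.prod_nonneg fun t _ => prodProb_nonneg hx (a t))

lemma EProd_add (f g : (Fin k → Fin n → Fin m) → ℝ) :
    EProd k x (fun a => f a + g a) = EProd k x f + EProd k x g := by
  simp only [EProd, mul_add, Finset.sum_add_distrib]

lemma EProd_const_mul (r : ℝ) (f : (Fin k → Fin n → Fin m) → ℝ) :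
    EProd k x (fun a => r * f a) = r * EProd k x f := by
  simp only [EProd, Finset.mul_sum, mul_left_comm r]

lemma EProd_sum {ι : Type*} (s : Finset ι) (f : ι → (Fin k → Fin n → Fin m) → ℝ) :
    EProd k x (fun a => ∑ i ∈ s, f i a) = ∑ i ∈ s, EProd k x (f i) := by
  simp only [EProd, Finset.mul_sum]
  exact Finset.sum_comm

lemma EProd_prod (g : (Fin n → Fin m) → ℝ) :
    EProd k x (fun a => ∏ t, g (a t)) = (∑ p, prodProb x p * g p) ^ k := by
  simp only [EProd, ← Finset.prod_mul_distrib]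
  rw [← Fintype.prod_sum (fun (_ : Fin k) p => prodProb x p * g p), Fin.prod_const]

lemma sum_prodProb (hx : ∀ i, ∑ c, x i c = 1) : ∑ p, prodProb x p = 1 := by
  simp only [prodProb, ← Fintype.prod_sum, hx, Finset.prod_const_one]

lemma EProd_one (hx : ∀ i, ∑ c, x i c = 1) : EProd k x (fun _ => 1) = 1 := by
  simpa [sum_prodProb hx] using EProd_prod (k := k) (x := x) (fun _ => 1)

lemma EProd_comp_shiftSamples [NeZero k] (c : Fin n → Fin k)
    (f : (Fin k → Fin n → Fin m) → ℝ) :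
    EProd k x (fun a => f (shiftSamples c a)) = EProd k x f := by
  have hinv : Function.LeftInverse (shiftSamples (m := m) (-c)) (shiftSamples c) := fun a => by
    funext t j; simp [shiftSamples]
  have hinv' : Function.RightInverse (shiftSamples (m := m) (-c)) (shiftSamples c) := fun a => by
    funext t j; simp [shiftSamples]
  refine Fintype.sum_equiv ⟨shiftSamples c, shiftSamples (-c), hinv, hinv'⟩ _ _ fun a => ?_
  congr 1
  simp only [prodProb, Equiv.coe_fn_mk, shiftSamples]
  rw [Finset.prod_comm, Finset.prod_comm (γ := Fin k)]
  exact Finset.prod_congr rfl fun j _ =>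
    (Fintype.prod_equiv (Equiv.addRight (c j)) _ _ fun t => rfl).symm

lemma PrProd_eq_EProd (E : (Fin k → Fin n → Fin m) → Prop) :
    PrProd k x E = EProd k x (fun a => if E a then 1 else 0) := by
  simp [PrProd, EProd]

lemma PrProd_le_EProd (hx : ∀ i c, 0 ≤ x i c) {E : (Fin k → Fin n → Fin m) → Prop}
    {f : (Fin k → Fin n → Fin m) → ℝ} (hf0 : ∀ a, 0 ≤ f a) (hf : ∀ a, E a → 1 ≤ f a) :
    PrProd k x E ≤ EProd k x f := by
  rw [PrProd_eq_EProd]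
  refine EProd_mono hx fun a => ?_
  split_ifs with hE
  exacts [hf a hE, hf0 a]

lemma PrProd_le_sum_PrProd (hx : ∀ i c, 0 ≤ x i c) {ι : Type*} [Fintype ι]
    {E : (Fin k → Fin n → Fin m) → Prop} {F : ι → (Fin k → Fin n → Fin m) → Prop}
    (hEF : ∀ a, E a → ∃ i, F i a) :
    PrProd k x E ≤ ∑ i, PrProd k x (F i) := by
  have hind : ∀ i a, (0 : ℝ) ≤ if F i a then 1 else 0 := fun i a => by positivity
  calc PrProd k x E ≤ EProd k x (fun a => ∑ i, if F i a then 1 else 0) :=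
        PrProd_le_EProd hx (fun a => Finset.sum_nonneg fun i _ => hind i a) fun a hE => by
          obtain ⟨i, hi⟩ := hEF a hE
          simpa [hi] using Finset.single_le_sum (fun j _ => hind j a) (Finset.mem_univ i)
    _ = ∑ i, PrProd k x (F i) := by simp only [EProd_sum, PrProd_eq_EProd]

lemma PrProd_add_PrProd_not (hx : ∀ i, ∑ c, x i c = 1) (E : (Fin k → Fin n → Fin m) → Prop) :
    PrProd k x E + PrProd k x (fun a => ¬ E a) = 1 := by
  rw [PrProd_eq_EProd, PrProd_eq_EProd, ← EProd_add]
  convert EProd_one (k := k) hx using 2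
  funext a
  by_cases hE : E a <;> simp [hE]

lemma EProd_exp_sampleMean_le [NeZero k] (hx : ∀ i, IsDist (x i)) (h : (Fin n → Fin m) → ℝ)
    (hh : ∀ p, h p ∈ Set.Icc (0 : ℝ) 1) (s : ℝ) :
    EProd k x (fun a => Real.exp (s * ((k : ℝ)⁻¹ * ∑ t, h (a t) - EU h x))) ≤
      Real.exp (s ^ 2 / (8 * k)) := by
  have hk : (k : ℝ) ≠ 0 := Nat.cast_ne_zero.2 (NeZero.ne k)
  have hfactor : ∀ a : Fin k → Fin n → Fin m,
      Real.exp (s * ((k : ℝ)⁻¹ * ∑ t, h (a t) - EU h x)) =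
        ∏ t, Real.exp (s / k * (h (a t) - EU h x)) := fun a => by
    rw [← Real.exp_sum, ← Finset.mul_sum, Finset.sum_sub_distrib, Finset.sum_const,
      Finset.card_univ, Fintype.card_fin, nsmul_eq_mul]
    field_simp
  simp only [hfactor]
  rw [EProd_prod (fun p => Real.exp (s / k * (h p - EU h x)))]
  calc (∑ p, prodProb x p * Real.exp (s / k * (h p - EU h x))) ^ k
      ≤ Real.exp ((s / k) ^ 2 / 8) ^ k :=
        pow_le_pow_left₀ (Finset.sum_nonneg fun p _ =>
            mul_nonneg (prodProb_nonneg (fun i => (hx i).1) p) (Real.exp_nonneg _))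
          (sum_mul_exp_mul_sub_le_of_mem_Icc _ h (prodProb_nonneg fun i => (hx i).1)
            (sum_prodProb fun i => (hx i).2) hh _) k
    _ = Real.exp (s ^ 2 / (8 * k)) := by
        rw [← Real.exp_nat_mul]
        field_simp

lemma EProd_exp_EU_emp_le [NeZero k] (hx : ∀ i, IsDist (x i)) (h : (Fin n → Fin m) → ℝ)
    (hh : ∀ p, h p ∈ Set.Icc (0 : ℝ) 1) (s : ℝ) :
    EProd k x (fun a => Real.exp (s * (EU h (emp k a) - EU h x))) ≤
      Real.exp (s ^ 2 / (8 * k)) := by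
  set w : ℝ := ((k : ℝ) ^ n)⁻¹
  have hw : ∑ _c : Fin n → Fin k, w = 1 := by
    simp [w, Finset.card_univ, NeZero.ne k]
  have jensen : ∀ a, Real.exp (s * (EU h (emp k a) - EU h x)) ≤ ∑ c : Fin n → Fin k,
      w * Real.exp (s * ((k : ℝ)⁻¹ * ∑ t, h (shiftSamples c a t) - EU h x)) := fun a => by
    have hsum : s * (EU h (emp k a) - EU h x) = ∑ c : Fin n → Fin k,
        w * (s * ((k : ℝ)⁻¹ * ∑ t, h (shiftSamples c a t) - EU h x)) := by
      have hμ : ∑ _c : Fin n → Fin k, w * (s * EU h x) = s * EU h x := by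
        rw [← Finset.sum_mul, hw, one_mul]
      rw [EU_emp_eq_average_shiftSamples, mul_sub, Finset.mul_sum, ← hμ, ← Finset.sum_sub_distrib]
      exact Finset.sum_congr rfl fun c _ => by ring
    rw [hsum]
    simpa using convexOn_exp.map_sum_le (t := Finset.univ) (fun _ _ => by positivity) hw
      (fun _ _ => Set.mem_univ _)
  calc EProd k x (fun a => Real.exp (s * (EU h (emp k a) - EU h x)))
      ≤ EProd k x (fun a => ∑ c : Fin n → Fin k,
          w * Real.exp (s * ((k : ℝ)⁻¹ * ∑ t, h (shiftSamples c a t) - EU h x))) :=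
        EProd_mono (fun i => (hx i).1) jensen
    _ = ∑ _c : Fin n → Fin k,
          w * EProd k x (fun a => Real.exp (s * ((k : ℝ)⁻¹ * ∑ t, h (a t) - EU h x))) := by
        simp only [EProd_sum, EProd_const_mul,
          EProd_comp_shiftSamples _ (fun a => Real.exp (s * ((k : ℝ)⁻¹ * ∑ t, h (a t) - EU h x)))]
    _ ≤ Real.exp (s ^ 2 / (8 * k)) := by
        rw [← Finset.sum_mul, hw, one_mul]
        exact EProd_exp_sampleMean_le hx h hh s

lemma PrProd_le_abs_EU_emp_sub [NeZero k] (hx : ∀ i, IsDist (x i)) (h : (Fin n → Fin m) → ℝ)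
    (hh : ∀ p, h p ∈ Set.Icc (0 : ℝ) 1) {δ : ℝ} (hδ : 0 ≤ δ) :
    PrProd k x (fun a => δ ≤ |EU h (emp k a) - EU h x|) ≤ 2 * Real.exp (-(2 * k * δ ^ 2)) := by
  set s : ℝ := 4 * k * δ
  have hs : 0 ≤ s := by positivity
  set D : (Fin k → Fin n → Fin m) → ℝ := fun a => EU h (emp k a) - EU h x
  calc PrProd k x (fun a => δ ≤ |D a|)
      ≤ EProd k x (fun a => Real.exp (-(s * δ)) * Real.exp (s * D a) +
          Real.exp (-(s * δ)) * Real.exp (-s * D a)) := by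
        refine PrProd_le_EProd (fun i => (hx i).1) (fun a => by positivity) fun a ha => ?_
        simp only [← Real.exp_add]
        rcases le_abs'.1 ha with hneg | hpos
        · exact le_add_of_nonneg_of_le (Real.exp_nonneg _) (Real.one_le_exp (by nlinarith))
        · exact le_add_of_le_of_nonneg (Real.one_le_exp (by nlinarith)) (Real.exp_nonneg _)
    _ ≤ Real.exp (-(s * δ)) * Real.exp (s ^ 2 / (8 * k)) +
          Real.exp (-(s * δ)) * Real.exp ((-s) ^ 2 / (8 * k)) := by
        rw [EProd_add, EProd_const_mul, EProd_const_mul]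
        gcongr <;> exact EProd_exp_EU_emp_le hx h hh _
    _ = 2 * Real.exp (-(2 * k * δ ^ 2)) := by
        have hk : (k : ℝ) ≠ 0 := Nat.cast_ne_zero.2 (NeZero.ne k)
        rw [neg_sq, ← two_mul, ← Real.exp_add]
        congr 2
        field_simp
        ring

end EProd

lemma mul_exp_neg_lt_of_lt {ε α : ℝ} (hm : 0 < m) (hn : 0 < n) (hε : 0 < ε)
    (hα : 0 < α)
    (hk : 8 * (Real.log m + Real.log n - Real.log α - Real.log ε + Real.log 8) / ε ^ 2 < k) :
    8 * m * n * Real.exp (-(k * ε ^ 2 / 8)) < α * ε := by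
  have hm' : (0 : ℝ) < m := Nat.cast_pos.2 hm
  have hn' : (0 : ℝ) < n := Nat.cast_pos.2 hn
  have hlog : Real.log (8 * m * n / (α * ε)) < k * ε ^ 2 / 8 := by
    rw [Real.log_div (by positivity) (by positivity), Real.log_mul (by positivity) hn'.ne',
      Real.log_mul (by norm_num) hm'.ne', Real.log_mul hα.ne' hε.ne']
    rw [div_lt_iff₀ (by positivity)] at hk
    linarith
  rw [Real.log_lt_iff_lt_exp (by positivity), div_lt_iff₀ (by positivity)] at hlog
  rw [Real.exp_neg, ← div_eq_mul_inv, div_lt_iff₀ (Real.exp_pos _), mul_comm (α * ε)]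
  exact hlog

lemma card_mul_two_exp_lt {ε α : ℝ} (hm : 0 < m) (hn : 0 < n) (hε : ε < 1)
    (hα : 0 < α) (hsmall : 8 * m * n * Real.exp (-(k * ε ^ 2 / 8)) < α * ε) :
    (Fintype.card (Fin n × Option (Fin m)) : ℝ) * (2 * Real.exp (-(2 * k * (ε / 2) ^ 2))) < α := by
  have hm1 : (1 : ℝ) ≤ m := Nat.one_le_cast.2 hm
  have hn1 : (1 : ℝ) ≤ n := Nat.one_le_cast.2 hn
  have hexp : Real.exp (-(2 * k * (ε / 2) ^ 2)) ≤ Real.exp (-(k * ε ^ 2 / 8)) :=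
    Real.exp_le_exp.2 (by nlinarith [sq_nonneg ε, (Nat.cast_nonneg k : (0 : ℝ) ≤ k)])
  have hcard : (Fintype.card (Fin n × Option (Fin m)) : ℝ) ≤ 2 * m * n := by
    simp only [Fintype.card_prod, Fintype.card_option, Fintype.card_fin]
    push_cast
    nlinarith
  calc (Fintype.card (Fin n × Option (Fin m)) : ℝ) * (2 * Real.exp (-(2 * k * (ε / 2) ^ 2)))
      ≤ 2 * m * n * (2 * Real.exp (-(k * ε ^ 2 / 8))) := by gcongr
    _ < α * ε / 2 := by linarith
    _ < α := by nlinarith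

/-- If `x` is a Nash equilibrium of an `n`-player `m`-action game,
`ε, α ∈ (0,1)`, and `k > 8(ln m + ln n − ln α − ln ε + ln 8)/ε²`, then the product
empirical distribution of `k` i.i.d. samples from `x` is an `ε`-Nash equilibrium
with probability greater than `1 − α`. -/
theorem stmt0 {n m : ℕ} (hn : 0 < n) (hm : 0 < m)
    (u : Fin n → (Fin n → Fin m) → ℝ)
    (hu : ∀ i a, 0 ≤ u i a ∧ u i a ≤ 1)
    (x : Fin n → Fin m → ℝ) (hx : ∀ i, IsDist (x i))
    (hNash : IsNash u x 0)
    (ε α : ℝ) (hε : 0 < ε ∧ ε < 1) (hα : 0 < α ∧ α < 1)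
    (k : ℕ)
    (hk : (k : ℝ) >
      8 * (Real.log m + Real.log n - Real.log α - Real.log ε + Real.log 8) / ε ^ 2) :
    PrProd k x (fun a => IsNash u (emp k a) ε) > 1 - α := by
  obtain ⟨hε0, hε1⟩ := hε
  have hsmall := mul_exp_neg_lt_of_lt hm hn hε0 hα.1 hk
  have : NeZero k := ⟨by
    rintro rfl
    norm_num at hsmall
    nlinarith [one_le_mul_of_one_le_of_one_le (Nat.one_le_cast.2 hm : (1 : ℝ) ≤ m)
      (Nat.one_le_cast.2 hn), mul_lt_mul'' hα.2 hε1 hα.1.le hε0.le]⟩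
  have hbad : ∀ a, ¬ IsNash u (emp k a) ε → ∃ q,
      ε / 2 ≤ |EU (deviationPayoff u q) (emp k a) - EU (deviationPayoff u q) x| := by
    intro a hnot
    by_contra! hclose
    refine hnot ?_
    convert hNash.of_abs_EU_deviationPayoff_sub_lt (fun i => (hx i).2) (sum_emp a) hclose using 1
    ring
  have htail := fun q =>
    PrProd_le_abs_EU_emp_sub (k := k) hx _ (deviationPayoff_mem_Icc hu q) (half_pos hε0).le
  have htotal := PrProd_add_PrProd_not (fun i => (hx i).2) (fun a => IsNash u (emp k a) ε)
  calc 1 - α < 1 - Fintype.card (Fin n × Option (Fin m)) *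
        (2 * Real.exp (-(2 * k * (ε / 2) ^ 2))) := by
        linarith [card_mul_two_exp_lt hm hn hε1 hα.1 hsmall]
    _ = 1 - ∑ _q : Fin n × Option (Fin m), 2 * Real.exp (-(2 * k * (ε / 2) ^ 2)) := by
        rw [Finset.sum_const, Finset.card_univ, nsmul_eq_mul]
    _ ≤ 1 - PrProd k x (fun a => ¬ IsNash u (emp k a) ε) := by
        gcongr
        exact (PrProd_le_sum_PrProd (fun i => (hx i).1) hbad).trans
          (Finset.sum_le_sum fun q _ => htail q)
    _ = PrProd k x (fun a => IsNash u (emp k a) ε) := by linarith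
end
end

section
/- For every n-player m-action game, every player i ∈ [n], every action a_i ∈ [m], every product distribution x = (x_j)_{j∈[n]} of the players, and every ε > 0 and k ∈ ℕ: the probability (over k i.i.d. samples from x) that |u_i(a_i, s_{-i}^k) − u_i(a_i, x_{-i})| ≥ ε is at most (4/ε)·e^{−(ε²/8)k}, where s_{-i}^k = (s_j^k)_{j≠i} is the product of the opponents' empirical distributions. -/
open Finset

open scoped Classical

noncomputable section

/-! ### Auxiliary lemmas -/

lemma exp_le_quad {y : ℝ} (hy : |y| ≤ 1) : Real.exp y ≤ 1 + y + 3/4 * y ^ 2 := by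
  have h := Real.exp_bound hy (n := 2) (by norm_num)
  have h2 : ∑ i ∈ Finset.range 2, y ^ i / (Nat.factorial i) = 1 + y := by
    simp [Finset.sum_range_succ, Nat.factorial]
  rw [h2] at h
  have h3 := (abs_le.mp h).2
  norm_num at h3
  nlinarith [sq_abs y]

lemma sum_prodProb_s3 {n m : ℕ} (z : Fin n → Fin m → ℝ) :
    ∑ r : Fin n → Fin m, prodProb z r = ∏ j, ∑ c, z j c := by
  simp only [prodProb]
  exact (Fintype.prod_sum fun j c => z j c).symm

lemma sum_coord_factor {n m : ℕ} (i : Fin n) (b : Fin m) (φ : Fin m → ℝ)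
    (G : (Fin n → Fin m) → ℝ) (hG : ∀ r c, G (Function.update r i c) = G r) :
    ∑ r, φ (r i) * G r
      = (∑ c, φ c) * ∑ w : {j : Fin n // j ≠ i} → Fin m,
          G ((Equiv.piSplitAt i fun _ => Fin m).symm (b, w)) := by
  classical
  set e := (Equiv.piSplitAt i fun _ : Fin n => Fin m) with he
  have h1 : ∀ (c : Fin m) (w : {j : Fin n // j ≠ i} → Fin m),
      e.symm (c, w) = Function.update (e.symm (b, w)) i c := by
    intro c w; funext j
    rcases eq_or_ne j i with rfl | hj
    · simp [he, Equiv.piSplitAt_symm_apply]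
    · simp [he, Equiv.piSplitAt_symm_apply, hj, Function.update_of_ne hj]
  have h2 : ∑ r, φ (r i) * G r = ∑ p : Fin m × ({j : Fin n // j ≠ i} → Fin m),
      φ ((e.symm p) i) * G (e.symm p) :=
    (Equiv.sum_comp e.symm (fun r => φ (r i) * G r)).symm
  rw [h2, Fintype.sum_prod_type, Finset.sum_mul_sum]
  refine Finset.sum_congr rfl fun c _ => Finset.sum_congr rfl fun w _ => ?_
  rw [h1 c w, Function.update_self, hG]

lemma EU_update_eq {n m : ℕ} (v : (Fin n → Fin m) → ℝ) (i : Fin n) (b : Fin m)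
    (y : Fin n → Fin m → ℝ) (hy : ∀ j, ∑ c, y j c = 1) :
    EU v (Function.update y i (pureStrat b))
      = ∑ r, prodProb y r * v (Function.update r i b) := by
  classical
  have split : ∀ (z : Fin n → Fin m → ℝ) (r : Fin n → Fin m),
      prodProb z r = z i (r i) * ∏ j ∈ univ.erase i, z j (r j) := by
    intro z r
    exact (Finset.mul_prod_erase univ (fun j => z j (r j)) (mem_univ i)).symm
  have erase_eq : ∀ (w : Fin m → ℝ) (r : Fin n → Fin m),
      ∏ j ∈ univ.erase i, (Function.update y i w) j (r j) = ∏ j ∈ univ.erase i, y j (r j) := by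
    intro w r
    exact Finset.prod_congr rfl fun j hj => by
      rw [Function.update_of_ne (Finset.ne_of_mem_erase hj)]
  set G : (Fin n → Fin m) → ℝ :=
    fun r => (∏ j ∈ univ.erase i, y j (r j)) * v (Function.update r i b) with hG'
  have hG : ∀ r c, G (Function.update r i c) = G r := by
    intro r c
    simp only [hG', Function.update_idem]
    congr 1
    exact Finset.prod_congr rfl fun j hj => by
      rw [Function.update_of_ne (Finset.ne_of_mem_erase hj)]
  have lhs : EU v (Function.update y i (pureStrat b))
      = ∑ r, (pureStrat b) (r i) * G r := by
    unfold EU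
    refine Finset.sum_congr rfl fun r _ => ?_
    rw [split, Function.update_self, erase_eq]
    rcases eq_or_ne (r i) b with h | h
    · have : Function.update r i b = r := by rw [← h]; exact Function.update_eq_self i r
      simp only [hG']
      rw [this]; ring
    · simp [pureStrat, h, hG']
  have rhs : ∑ r, prodProb y r * v (Function.update r i b) = ∑ r, y i (r i) * G r := by
    refine Finset.sum_congr rfl fun r _ => ?_
    rw [split]; ring
  rw [lhs, rhs, sum_coord_factor i b _ G hG, sum_coord_factor i b _ G hG, hy i]
  have : ∑ c, pureStrat b c = 1 := by simp [pureStrat]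
  rw [this]

lemma EU_bounds {n m : ℕ} (v : (Fin n → Fin m) → ℝ) (hv : ∀ a, 0 ≤ v a ∧ v a ≤ 1)
    (z : Fin n → Fin m → ℝ) (hz0 : ∀ j c, 0 ≤ z j c) (hz1 : ∀ j, ∑ c, z j c ≤ 1) :
    0 ≤ EU v z ∧ EU v z ≤ 1 := by
  have hp0 : ∀ r, 0 ≤ prodProb z r := fun r => Finset.prod_nonneg fun j _ => hz0 j _
  constructor
  · exact Finset.sum_nonneg fun r _ => mul_nonneg (hp0 r) (hv r).1
  · calc EU v z ≤ ∑ r, prodProb z r :=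
        Finset.sum_le_sum fun r _ => mul_le_of_le_one_right (hp0 r) (hv r).2
    _ = ∏ j, ∑ c, z j c := sum_prodProb_s3 z
    _ ≤ 1 := Finset.prod_le_one (fun j _ => Finset.sum_nonneg fun c _ => hz0 j c)
        (fun j _ => hz1 j)

lemma shift_sum {n m k : ℕ} [NeZero k] (x : Fin n → Fin m → ℝ) (c : Fin n → Fin k)
    (F : (Fin k → Fin n → Fin m) → ℝ) :
    ∑ a : Fin k → Fin n → Fin m, (∏ t, prodProb x (a t)) * F (fun t j => a (t + c j) j)
      = ∑ a : Fin k → Fin n → Fin m, (∏ t, prodProb x (a t)) * F a := by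
  classical
  set σ : (Fin k → Fin n → Fin m) ≃ (Fin k → Fin n → Fin m) :=
    { toFun := fun a => fun t j => a (t + c j) j
      invFun := fun a => fun t j => a (t - c j) j
      left_inv := by intro a; funext t j; simp
      right_inv := by intro a; funext t j; simp } with hσ
  have Pinv : ∀ a, (∏ t, prodProb x (σ a t)) = ∏ t, prodProb x (a t) := by
    intro a
    simp only [hσ, prodProb, Equiv.coe_fn_mk]
    rw [Finset.prod_comm]
    conv_rhs => rw [Finset.prod_comm]
    refine Finset.prod_congr rfl fun j _ => ?_
    exact Equiv.prod_comp (Equiv.addRight (c j)) (fun t => x j (a t j))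
  show ∑ a, (∏ t, prodProb x (a t)) * F (σ a) = ∑ a, (∏ t, prodProb x (a t)) * F a
  refine Fintype.sum_equiv σ _ _ fun a => ?_
  rw [Pinv a]

lemma avg_shift {n m k : ℕ} [NeZero k] (g : (Fin n → Fin m) → ℝ) (a : Fin k → Fin n → Fin m) :
    ∑ c : Fin n → Fin k, ∑ t : Fin k, g (fun j => a (t + c j) j)
      = (k : ℝ) * ∑ τ : Fin n → Fin k, g (fun j => a (τ j) j) := by
  rw [Finset.sum_comm]
  have h : ∀ t : Fin k, ∑ c : Fin n → Fin k, g (fun j => a (t + c j) j)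
      = ∑ τ : Fin n → Fin k, g (fun j => a (τ j) j) := by
    intro t
    exact Fintype.sum_equiv (Equiv.piCongrRight fun _ => Equiv.addLeft t) _ _ (fun c => rfl)
  rw [Finset.sum_congr rfl fun t _ => h t, Finset.sum_const, card_univ, Fintype.card_fin,
    nsmul_eq_mul]


lemma emp_rowsum {n m k : ℕ} (a : Fin k → Fin n → Fin m) (j : Fin n) :
    ∑ c, emp k a j c = (k:ℝ) / (k:ℝ) := by
  simp only [emp]
  rw [← Finset.sum_div]
  congr 1
  have hcard := Finset.card_eq_sum_card_fiberwise
    (s := (univ : Finset (Fin k))) (t := (univ : Finset (Fin m)))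
    (f := fun t => a t j) (fun x _ => mem_univ _)
  rw [card_univ, Fintype.card_fin] at hcard
  rw [← Nat.cast_sum]
  exact_mod_cast hcard.symm

lemma emp_expand {n m k : ℕ} (hk : k ≠ 0) (v : (Fin n → Fin m) → ℝ) (i : Fin n) (b : Fin m)
    (a : Fin k → Fin n → Fin m) :
    EU v (Function.update (emp k a) i (pureStrat b))
      = (∑ τ : Fin n → Fin k, v (Function.update (fun j => a (τ j) j) i b)) / (k:ℝ)^n := by
  classical
  have hsum : ∀ j, ∑ c, emp k a j c = 1 := by
    intro j
    rw [emp_rowsum, div_self (Nat.cast_ne_zero.mpr hk)]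
  rw [EU_update_eq v i b (emp k a) hsum]
  have hp : ∀ r : Fin n → Fin m, prodProb (emp k a) r
      = (∑ τ : Fin n → Fin k, ∏ j, (if a (τ j) j = r j then (1:ℝ) else 0)) / (k:ℝ)^n := by
    intro r
    simp only [prodProb, emp]
    rw [Finset.prod_div_distrib]
    congr 1
    · have hps := Fintype.prod_sum (fun (j : Fin n) (t : Fin k) =>
        if a t j = r j then (1:ℝ) else 0)
      rw [← hps]
      refine Finset.prod_congr rfl fun j _ => ?_
      rw [Finset.card_filter]
      push_cast
      rfl
    · rw [Finset.prod_const, card_univ, Fintype.card_fin]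
  have key : ∀ τ : Fin n → Fin k,
      ∑ r : Fin n → Fin m,
        (∏ j, (if a (τ j) j = r j then (1:ℝ) else 0)) * v (Function.update r i b)
        = v (Function.update (fun j => a (τ j) j) i b) := by
    intro τ
    have hterm : ∀ r : Fin n → Fin m,
        (∏ j, (if a (τ j) j = r j then (1:ℝ) else 0)) * v (Function.update r i b)
        = if r = (fun j => a (τ j) j) then v (Function.update r i b) else 0 := by
      intro r
      rw [Fintype.prod_boole]
      have hiff : (∀ j, a (τ j) j = r j) ↔ r = fun j => a (τ j) j := by
        rw [funext_iff]
        exact ⟨fun h j => (h j).symm, fun h j => (h j).symm⟩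
      simp only [hiff]
      split_ifs with h
      · rw [one_mul]
      · rw [zero_mul]
    rw [Finset.sum_congr rfl fun r _ => hterm r, Finset.sum_ite_eq' univ _
      (fun r => v (Function.update r i b)), if_pos (mem_univ _)]
  calc ∑ r, prodProb (emp k a) r * v (Function.update r i b)
      = ∑ r, (∑ τ : Fin n → Fin k,
          (∏ j, (if a (τ j) j = r j then (1:ℝ) else 0)) * v (Function.update r i b)) / (k:ℝ)^n := by
        refine Finset.sum_congr rfl fun r _ => ?_
        rw [hp, div_mul_eq_mul_div, Finset.sum_mul]
    _ = (∑ r, ∑ τ : Fin n → Fin k,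
          (∏ j, (if a (τ j) j = r j then (1:ℝ) else 0)) * v (Function.update r i b)) / (k:ℝ)^n := by
        rw [← Finset.sum_div]
    _ = (∑ τ : Fin n → Fin k, ∑ r,
          (∏ j, (if a (τ j) j = r j then (1:ℝ) else 0)) * v (Function.update r i b)) / (k:ℝ)^n := by
        rw [Finset.sum_comm]
    _ = (∑ τ : Fin n → Fin k, v (Function.update (fun j => a (τ j) j) i b)) / (k:ℝ)^n := by
        rw [Finset.sum_congr rfl fun τ _ => key τ]

lemma mgf_single {n m : ℕ} (x : Fin n → Fin m → ℝ) (hx : ∀ j, IsDist (x j))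
    (h' : (Fin n → Fin m) → ℝ) (hh : ∀ r, 0 ≤ h' r ∧ h' r ≤ 1)
    (s : ℝ) (hs : |s| ≤ 1) :
    ∑ r, prodProb x r * Real.exp (s * (h' r - ∑ r', prodProb x r' * h' r'))
      ≤ Real.exp (3/4 * s^2) := by
  set μ := ∑ r', prodProb x r' * h' r' with hμ
  have hp0 : ∀ r, 0 ≤ prodProb x r := fun r => Finset.prod_nonneg fun j _ => (hx j).1 _
  have hp1 : ∑ r, prodProb x r = 1 := by
    rw [sum_prodProb_s3]; exact Finset.prod_eq_one fun j _ => (hx j).2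
  have hμ0 : 0 ≤ μ := Finset.sum_nonneg fun r _ => mul_nonneg (hp0 r) (hh r).1
  have hμ1 : μ ≤ 1 := by
    calc μ ≤ ∑ r, prodProb x r :=
        Finset.sum_le_sum fun r _ => mul_le_of_le_one_right (hp0 r) (hh r).2
    _ = 1 := hp1
  have step : ∀ r, prodProb x r * Real.exp (s * (h' r - μ))
      ≤ prodProb x r * (1 + s * (h' r - μ) + 3/4 * s^2) := by
    intro r
    refine mul_le_mul_of_nonneg_left ?_ (hp0 r)
    have h1 : |h' r - μ| ≤ 1 :=
      abs_le.mpr ⟨by linarith [(hh r).1], by linarith [(hh r).2]⟩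
    have h1sq : (h' r - μ)^2 ≤ 1 := by
      rw [← sq_abs]; nlinarith [abs_nonneg (h' r - μ)]
    have habs : |s * (h' r - μ)| ≤ 1 := by
      rw [abs_mul]
      calc |s| * |h' r - μ| ≤ 1 * 1 :=
        mul_le_mul hs h1 (abs_nonneg _) zero_le_one
      _ = 1 := one_mul 1
    calc Real.exp (s * (h' r - μ))
        ≤ 1 + s * (h' r - μ) + 3/4 * (s * (h' r - μ))^2 := exp_le_quad habs
      _ ≤ 1 + s * (h' r - μ) + 3/4 * s^2 := by nlinarith [sq_nonneg s]
  calc ∑ r, prodProb x r * Real.exp (s * (h' r - μ))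
      ≤ ∑ r, prodProb x r * (1 + s * (h' r - μ) + 3/4 * s^2) :=
        Finset.sum_le_sum fun r _ => step r
    _ = 1 + 3/4 * s^2 := by
        have expand : ∀ r, prodProb x r * (1 + s * (h' r - μ) + 3/4 * s^2)
            = prodProb x r * (1 + 3/4 * s^2 - s * μ) + s * (prodProb x r * h' r) := by
          intro r; ring
        rw [Finset.sum_congr rfl fun r _ => expand r, Finset.sum_add_distrib,
          ← Finset.sum_mul, ← Finset.mul_sum, hp1, ← hμ]
        ring
    _ ≤ Real.exp (3/4 * s^2) := by linarith [Real.add_one_le_exp (3/4 * s^2)]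

lemma mgf_iid {n m : ℕ} (x : Fin n → Fin m → ℝ) (hx : ∀ j, IsDist (x j))
    (h' : (Fin n → Fin m) → ℝ) (hh : ∀ r, 0 ≤ h' r ∧ h' r ≤ 1)
    (k : ℕ) (s : ℝ) (hs : |s| ≤ 1) :
    ∑ a : Fin k → Fin n → Fin m, (∏ t, prodProb x (a t)) *
        Real.exp (s * ∑ t, (h' (a t) - ∑ r', prodProb x r' * h' r'))
      ≤ Real.exp (3/4 * s^2 * k) := by
  set μ := ∑ r', prodProb x r' * h' r' with hμ
  have expand : ∀ a : Fin k → Fin n → Fin m,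
      (∏ t, prodProb x (a t)) * Real.exp (s * ∑ t, (h' (a t) - μ))
      = ∏ t, (prodProb x (a t) * Real.exp (s * (h' (a t) - μ))) := by
    intro a
    rw [Finset.mul_sum, Real.exp_sum, Finset.prod_mul_distrib]
  rw [Finset.sum_congr rfl fun a _ => expand a]
  have hps := Fintype.prod_sum (fun (_t : Fin k) (r : Fin n → Fin m) =>
    prodProb x r * Real.exp (s * (h' r - μ)))
  rw [← hps]
  have hfac : ∀ t : Fin k, (∑ r, prodProb x r * Real.exp (s * (h' r - μ)))
      ≤ Real.exp (3/4 * s^2) := fun t => mgf_single x hx h' hh s hs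
  have hfac0 : ∀ t : Fin k, (0:ℝ) ≤ ∑ r, prodProb x r * Real.exp (s * (h' r - μ)) :=
    fun t => Finset.sum_nonneg fun r _ =>
      mul_nonneg (Finset.prod_nonneg fun j _ => (hx j).1 _) (Real.exp_pos _).le
  calc ∏ _t : Fin k, (∑ r, prodProb x r * Real.exp (s * (h' r - μ)))
      ≤ ∏ _t : Fin k, Real.exp (3/4 * s^2) :=
        Finset.prod_le_prod (fun t _ => hfac0 t) (fun t _ => hfac t)
    _ = Real.exp (3/4 * s^2 * k) := by
        rw [Finset.prod_const, card_univ, Fintype.card_fin, ← Real.exp_nat_mul]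
        ring_nf

lemma mgf_f {n m k : ℕ} [NeZero k] (x : Fin n → Fin m → ℝ) (hx : ∀ j, IsDist (x j))
    (u1 : (Fin n → Fin m) → ℝ) (hu1 : ∀ r, 0 ≤ u1 r ∧ u1 r ≤ 1)
    (i : Fin n) (b : Fin m) (s : ℝ) (hs : |s| ≤ 1) :
    ∑ a : Fin k → Fin n → Fin m, (∏ t, prodProb x (a t)) *
        Real.exp (s * (k:ℝ) *
          (EU u1 (Function.update (emp k a) i (pureStrat b)) -
            ∑ r, prodProb x r * u1 (Function.update r i b)))
      ≤ Real.exp (3/4 * s^2 * k) := by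
  classical
  have hk : k ≠ 0 := NeZero.ne k
  have hk0 : ((k:ℝ)) ≠ 0 := Nat.cast_ne_zero.mpr hk
  set g : (Fin n → Fin m) → ℝ := fun r => u1 (Function.update r i b) with hg'
  have hg : ∀ r, 0 ≤ g r ∧ g r ≤ 1 := fun r => hu1 _
  set μ : ℝ := ∑ r, prodProb x r * g r with hμ'
  set N : ℝ := (k:ℝ)^n with hN'
  have hN0 : (0:ℝ) < N := by positivity
  have hNcast : ((Fintype.card (Fin n → Fin k) : ℕ) : ℝ) = N := by
    rw [Fintype.card_fun, Fintype.card_fin, Fintype.card_fin]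
    push_cast
    rfl
  set Y : (Fin n → Fin k) → (Fin k → Fin n → Fin m) → ℝ :=
    fun c a => (∑ t, g (fun j => a (t + c j) j)) / k with hY'
  set P : (Fin k → Fin n → Fin m) → ℝ := fun a => ∏ t, prodProb x (a t) with hP'
  have hP0 : ∀ a, 0 ≤ P a :=
    fun a => Finset.prod_nonneg fun t _ =>
      Finset.prod_nonneg fun j _ => (hx j).1 _
  -- the sum over shifts of Y equals the full tuple sum
  have hsum_c : ∀ a : Fin k → Fin n → Fin m,
      ∑ c : Fin n → Fin k, Y c a = ∑ τ : Fin n → Fin k, g (fun j => a (τ j) j) := by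
    intro a
    simp only [hY']
    rw [← Finset.sum_div, avg_shift g a, mul_comm, mul_div_assoc, div_self hk0, mul_one]
  -- f as average of Y over shifts
  have hfa : ∀ a : Fin k → Fin n → Fin m,
      EU u1 (Function.update (emp k a) i (pureStrat b))
        = (∑ c : Fin n → Fin k, Y c a) / N := by
    intro a
    rw [hsum_c a, emp_expand hk u1 i b a]
  -- pointwise Jensen
  have jensen : ∀ a : Fin k → Fin n → Fin m,
      Real.exp (s * (k:ℝ) * (EU u1 (Function.update (emp k a) i (pureStrat b)) - μ))
        ≤ ∑ c : Fin n → Fin k, (1/N) * Real.exp (s * (k:ℝ) * (Y c a - μ)) := by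
    intro a
    have h₁ : ∑ _c : Fin n → Fin k, (1/N) = 1 := by
      rw [Finset.sum_const, card_univ, nsmul_eq_mul, hNcast, mul_one_div, div_self hN0.ne']
    have harg : s * (k:ℝ) * (EU u1 (Function.update (emp k a) i (pureStrat b)) - μ)
        = ∑ c : Fin n → Fin k, (1/N) • (s * (k:ℝ) * (Y c a - μ)) := by
      simp only [smul_eq_mul]
      have hterm : ∀ c : Fin n → Fin k, (1/N) * (s * (k:ℝ) * (Y c a - μ))
          = (s * k / N) * Y c a - s * k * μ / N := fun c => by ring
      rw [Finset.sum_congr rfl fun c _ => hterm c, Finset.sum_sub_distrib,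
        ← Finset.mul_sum, hsum_c a, Finset.sum_const, card_univ, nsmul_eq_mul, hNcast]
      rw [hfa a, hsum_c a]
      field_simp
    have hjen := convexOn_exp.map_sum_le (t := (univ : Finset (Fin n → Fin k)))
      (w := fun _ => 1/N) (p := fun c => s * (k:ℝ) * (Y c a - μ))
      (fun c _ => by positivity) h₁ (fun c _ => Set.mem_univ _)
    rw [harg]
    calc Real.exp (∑ c : Fin n → Fin k, (1/N) • (s * (k:ℝ) * (Y c a - μ)))
        ≤ ∑ c : Fin n → Fin k, (1/N) • Real.exp (s * (k:ℝ) * (Y c a - μ)) := hjen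
      _ = ∑ c : Fin n → Fin k, (1/N) * Real.exp (s * (k:ℝ) * (Y c a - μ)) := by
          simp only [smul_eq_mul]
  -- sum the pointwise bound, swap, use shift invariance
  have step1 : ∑ a : Fin k → Fin n → Fin m, P a *
      Real.exp (s * (k:ℝ) * (EU u1 (Function.update (emp k a) i (pureStrat b)) - μ))
      ≤ ∑ c : Fin n → Fin k, (1/N) *
          (∑ a : Fin k → Fin n → Fin m, P a * Real.exp (s * (k:ℝ) * (Y c a - μ))) := by
    calc ∑ a : Fin k → Fin n → Fin m, P a *
        Real.exp (s * (k:ℝ) * (EU u1 (Function.update (emp k a) i (pureStrat b)) - μ))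
        ≤ ∑ a : Fin k → Fin n → Fin m, P a *
            (∑ c : Fin n → Fin k, (1/N) * Real.exp (s * (k:ℝ) * (Y c a - μ))) :=
          Finset.sum_le_sum fun a _ => mul_le_mul_of_nonneg_left (jensen a) (hP0 a)
      _ = ∑ a : Fin k → Fin n → Fin m, ∑ c : Fin n → Fin k,
            (1/N) * (P a * Real.exp (s * (k:ℝ) * (Y c a - μ))) := by
          refine Finset.sum_congr rfl fun a _ => ?_
          rw [Finset.mul_sum]
          exact Finset.sum_congr rfl fun c _ => by ring
      _ = ∑ c : Fin n → Fin k, ∑ a : Fin k → Fin n → Fin m,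
            (1/N) * (P a * Real.exp (s * (k:ℝ) * (Y c a - μ))) := Finset.sum_comm
      _ = ∑ c : Fin n → Fin k, (1/N) *
            (∑ a : Fin k → Fin n → Fin m, P a * Real.exp (s * (k:ℝ) * (Y c a - μ))) := by
          exact Finset.sum_congr rfl fun c _ => (Finset.mul_sum _ _ _).symm
  set Z : (Fin k → Fin n → Fin m) → ℝ := fun a => (∑ t, g (a t)) / k with hZ'
  -- each shifted sum equals the unshifted one
  have hshift : ∀ c : Fin n → Fin k,
      ∑ a : Fin k → Fin n → Fin m, P a * Real.exp (s * (k:ℝ) * (Y c a - μ))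
        = ∑ a : Fin k → Fin n → Fin m, P a * Real.exp (s * (k:ℝ) * (Z a - μ)) := by
    intro c
    exact shift_sum (k := k) x c
      (fun a => Real.exp (s * (k:ℝ) * ((∑ t, g (a t)) / k - μ)))
  -- unshifted: reduce to iid mgf
  have hfinal : ∑ a : Fin k → Fin n → Fin m, P a * Real.exp (s * (k:ℝ) * (Z a - μ))
      ≤ Real.exp (3/4 * s^2 * k) := by
    have harg : ∀ a : Fin k → Fin n → Fin m,
        s * (k:ℝ) * (Z a - μ) = s * ∑ t, (g (a t) - μ) := by
      intro a
      simp only [hZ']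
      rw [Finset.sum_sub_distrib, Finset.sum_const, card_univ, Fintype.card_fin,
        nsmul_eq_mul]
      field_simp
    rw [Finset.sum_congr rfl fun a _ => by rw [harg a]]
    exact mgf_iid x hx g hg k s hs
  calc ∑ a : Fin k → Fin n → Fin m, P a *
      Real.exp (s * (k:ℝ) * (EU u1 (Function.update (emp k a) i (pureStrat b)) - μ))
      ≤ ∑ c : Fin n → Fin k, (1/N) *
          (∑ a : Fin k → Fin n → Fin m, P a * Real.exp (s * (k:ℝ) * (Y c a - μ))) := step1
    _ = ∑ c : Fin n → Fin k, (1/N) *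
          (∑ a : Fin k → Fin n → Fin m, P a * Real.exp (s * (k:ℝ) * (Z a - μ))) := by
        exact Finset.sum_congr rfl fun c _ => by rw [hshift c]
    _ = ∑ a : Fin k → Fin n → Fin m, P a * Real.exp (s * (k:ℝ) * (Z a - μ)) := by
        rw [← Finset.sum_mul, (by
          rw [Finset.sum_const, card_univ, nsmul_eq_mul, hNcast, mul_one_div, div_self hN0.ne'] :
          ∑ _c : Fin n → Fin k, (1/N) = 1), one_mul]
    _ ≤ Real.exp (3/4 * s^2 * k) := hfinal

/-- For every player `i`, action `b`, and product distribution `x`,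
the probability over `k` i.i.d. samples from `x` that the payoff of `i` when playing
`b` against the opponents' empirical product distribution deviates from the payoff
against `x₋ᵢ` by at least `ε` is at most `(4/ε)·e^{−(ε²/8)k}`. -/
theorem stmt3 {n m : ℕ} (hn : 0 < n) (hm : 0 < m)
    (u : Fin n → (Fin n → Fin m) → ℝ)
    (hu : ∀ i a, 0 ≤ u i a ∧ u i a ≤ 1)
    (i : Fin n) (b : Fin m)
    (x : Fin n → Fin m → ℝ) (hx : ∀ j, IsDist (x j))
    (ε : ℝ) (hε : 0 < ε) (k : ℕ) :
    PrProd k x (fun a =>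
        |EU (u i) (Function.update (emp k a) i (pureStrat b)) -
          EU (u i) (Function.update x i (pureStrat b))| ≥ ε)
      ≤ 4 / ε * Real.exp (-(ε ^ 2 / 8) * k) := by
  classical
  have hpure0 : ∀ c : Fin m, 0 ≤ pureStrat b c := by
    intro c; unfold pureStrat; split <;> norm_num
  have hpure1 : ∑ c, pureStrat b c = 1 := by simp [pureStrat]
  set f : (Fin k → Fin n → Fin m) → ℝ :=
    fun a => EU (u i) (Function.update (emp k a) i (pureStrat b)) with hf'
  set ν : ℝ := EU (u i) (Function.update x i (pureStrat b)) with hν'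
  -- bounds
  have hfb : ∀ a, 0 ≤ f a ∧ f a ≤ 1 := by
    intro a
    refine EU_bounds (u i) (hu i) _ ?_ ?_
    · intro j c
      rcases eq_or_ne j i with rfl | hj
      · rw [Function.update_self]; exact hpure0 c
      · rw [Function.update_of_ne hj]
        exact div_nonneg (Nat.cast_nonneg _) (Nat.cast_nonneg _)
    · intro j
      rcases eq_or_ne j i with rfl | hj
      · simp only [Function.update_self]; rw [hpure1]
      · simp only [Function.update_of_ne hj]
        rw [emp_rowsum]
        rcases Nat.eq_zero_or_pos k with rfl | hk
        · norm_num
        · rw [div_self (Nat.cast_pos.mpr hk).ne']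
  have hνb : 0 ≤ ν ∧ ν ≤ 1 := by
    refine EU_bounds (u i) (hu i) _ ?_ ?_
    · intro j c
      rcases eq_or_ne j i with rfl | hj
      · rw [Function.update_self]; exact hpure0 c
      · rw [Function.update_of_ne hj]; exact (hx j).1 c
    · intro j
      rcases eq_or_ne j i with rfl | hj
      · simp only [Function.update_self]; rw [hpure1]
      · simp only [Function.update_of_ne hj]; rw [(hx j).2]
  have habs1 : ∀ a, |f a - ν| ≤ 1 := by
    intro a
    rw [abs_le]
    constructor <;> [linarith [(hfb a).1, hνb.2]; linarith [(hfb a).2, hνb.1]]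
  show PrProd k x (fun a => |f a - ν| ≥ ε) ≤ 4 / ε * Real.exp (-(ε ^ 2 / 8) * k)
  by_cases hε2 : ε ≤ 2
  swap
  · -- ε > 2 : the event is empty
    have hzero : PrProd k x (fun a => |f a - ν| ≥ ε) = 0 := by
      refine Finset.sum_eq_zero fun a _ => if_neg ?_
      push_neg at hε2
      intro hcon
      have h := habs1 a
      linarith
    rw [hzero]
    positivity
  rcases Nat.eq_zero_or_pos k with rfl | hkpos
  · -- k = 0
    have h1 : PrProd 0 x (fun a => |f a - ν| ≥ ε)
        ≤ ∑ _a : Fin 0 → Fin n → Fin m, (1:ℝ) := by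
      refine Finset.sum_le_sum fun a _ => ?_
      split_ifs
      · simp
      · norm_num
    have h2 : ∑ _a : Fin 0 → Fin n → Fin m, (1:ℝ) = 1 := by
      simp
    rw [Nat.cast_zero, mul_zero, Real.exp_zero, mul_one]
    refine le_trans h1 (le_trans (le_of_eq h2) ?_)
    rw [le_div_iff₀ hε]
    linarith
  -- main case : k ≥ 1 and ε ≤ 2
  haveI : NeZero k := ⟨hkpos.ne'⟩
  have hk0 : (0:ℝ) < (k:ℝ) := Nat.cast_pos.mpr hkpos
  set μ : ℝ := ∑ r, prodProb x r * u i (Function.update r i b) with hμ'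
  have hνμ : ν = μ := EU_update_eq (u i) i b x (fun j => (hx j).2)
  set P : (Fin k → Fin n → Fin m) → ℝ := fun a => ∏ t, prodProb x (a t) with hP'
  have hP0 : ∀ a, 0 ≤ P a :=
    fun a => Finset.prod_nonneg fun t _ =>
      Finset.prod_nonneg fun j _ => (hx j).1 _
  -- Chernoff device
  have chern : ∀ (gg : (Fin k → Fin n → Fin m) → ℝ) (t B : ℝ), 0 ≤ t →
      (∑ a, P a * Real.exp (t * gg a)) ≤ B →
      PrProd k x (fun a => gg a ≥ ε) ≤ Real.exp (-(t * ε)) * B := by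
    intro gg t B ht hB
    have hterm : ∀ a, (if gg a ≥ ε then P a else 0)
        ≤ Real.exp (-(t * ε)) * (P a * Real.exp (t * gg a)) := by
      intro a
      split_ifs with h
      · have h1 : (1:ℝ) ≤ Real.exp (-(t * ε)) * Real.exp (t * gg a) := by
          rw [← Real.exp_add]
          refine Real.one_le_exp ?_
          nlinarith
        calc P a = P a * 1 := (mul_one _).symm
          _ ≤ P a * (Real.exp (-(t * ε)) * Real.exp (t * gg a)) :=
            mul_le_mul_of_nonneg_left h1 (hP0 a)
          _ = Real.exp (-(t * ε)) * (P a * Real.exp (t * gg a)) := by ring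
      · exact mul_nonneg (Real.exp_pos _).le (mul_nonneg (hP0 a) (Real.exp_pos _).le)
    calc PrProd k x (fun a => gg a ≥ ε)
        ≤ ∑ a, Real.exp (-(t * ε)) * (P a * Real.exp (t * gg a)) :=
          Finset.sum_le_sum fun a _ => hterm a
      _ = Real.exp (-(t * ε)) * ∑ a, P a * Real.exp (t * gg a) := by
          rw [Finset.mul_sum]
      _ ≤ Real.exp (-(t * ε)) * B :=
          mul_le_mul_of_nonneg_left hB (Real.exp_pos _).le
  -- the two tails
  set s : ℝ := ε / 2 with hs'
  have hs0 : 0 ≤ s := by positivity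
  have hs1 : |s| ≤ 1 := by
    rw [abs_of_nonneg hs0]
    linarith
  have hmgf1 : ∑ a, P a * Real.exp ((s * (k:ℝ)) * (f a - μ))
      ≤ Real.exp (3/4 * s^2 * k) := by
    have := mgf_f (k := k) x hx (u i) (hu i) i b s hs1
    calc ∑ a, P a * Real.exp ((s * (k:ℝ)) * (f a - μ))
        = ∑ a, P a * Real.exp (s * (k:ℝ) * (f a - μ)) := by
          refine Finset.sum_congr rfl fun a _ => ?_
          ring_nf
      _ ≤ Real.exp (3/4 * s^2 * k) := this
  have hmgf2 : ∑ a, P a * Real.exp ((s * (k:ℝ)) * (μ - f a))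
      ≤ Real.exp (3/4 * s^2 * k) := by
    have h := mgf_f (k := k) x hx (u i) (hu i) i b (-s) (by rwa [abs_neg])
    have he : ∀ a : Fin k → Fin n → Fin m,
        -s * (k:ℝ) * (f a - μ) = (s * (k:ℝ)) * (μ - f a) := fun a => by ring
    calc ∑ a, P a * Real.exp ((s * (k:ℝ)) * (μ - f a))
        = ∑ a, P a * Real.exp (-s * (k:ℝ) * (f a - μ)) := by
          refine Finset.sum_congr rfl fun a _ => ?_
          rw [he a]
      _ ≤ Real.exp (3/4 * (-s)^2 * k) := h
      _ = Real.exp (3/4 * s^2 * k) := by rw [neg_sq]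
  have tail1 := chern (fun a => f a - μ) (s * (k:ℝ)) (Real.exp (3/4 * s^2 * k))
    (by positivity) hmgf1
  have tail2 := chern (fun a => μ - f a) (s * (k:ℝ)) (Real.exp (3/4 * s^2 * k))
    (by positivity) hmgf2
  -- union bound
  have hunion : PrProd k x (fun a => |f a - ν| ≥ ε)
      ≤ PrProd k x (fun a => f a - μ ≥ ε) + PrProd k x (fun a => μ - f a ≥ ε) := by
    unfold PrProd
    rw [← Finset.sum_add_distrib]
    refine Finset.sum_le_sum fun a _ => ?_
    by_cases h : |f a - ν| ≥ ε
    · rw [if_pos h]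
      rcases le_abs.mp h with h1 | h1
      · rw [if_pos (by rw [← hνμ]; exact h1)]
        have : (0:ℝ) ≤ if μ - f a ≥ ε then P a else 0 := by
          split_ifs; exacts [hP0 a, le_refl 0]
        linarith
      · rw [if_pos (show μ - f a ≥ ε by rw [← hνμ]; linarith)]
        have : (0:ℝ) ≤ if f a - μ ≥ ε then P a else 0 := by
          split_ifs; exacts [hP0 a, le_refl 0]
        linarith
    · rw [if_neg h]
      have h1 : (0:ℝ) ≤ if f a - μ ≥ ε then P a else 0 := by
        split_ifs; exacts [hP0 a, le_refl 0]
      have h2 : (0:ℝ) ≤ if μ - f a ≥ ε then P a else 0 := by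
        split_ifs; exacts [hP0 a, le_refl 0]
      linarith
  -- numerics
  have hexp : Real.exp (-(s * (k:ℝ) * ε)) * Real.exp (3/4 * s^2 * k)
      ≤ Real.exp (-(ε ^ 2 / 8) * k) := by
    rw [← Real.exp_add]
    refine Real.exp_le_exp.mpr ?_
    rw [hs']
    nlinarith [sq_nonneg ε, hk0.le, mul_nonneg (sq_nonneg ε) hk0.le]
  have h24 : (2:ℝ) ≤ 4 / ε := by
    rw [le_div_iff₀ hε]
    linarith
  calc PrProd k x (fun a => |f a - ν| ≥ ε)
      ≤ PrProd k x (fun a => f a - μ ≥ ε) + PrProd k x (fun a => μ - f a ≥ ε) := hunion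
    _ ≤ Real.exp (-(s * (k:ℝ) * ε)) * Real.exp (3/4 * s^2 * k)
        + Real.exp (-(s * (k:ℝ) * ε)) * Real.exp (3/4 * s^2 * k) := add_le_add tail1 tail2
    _ = 2 * (Real.exp (-(s * (k:ℝ) * ε)) * Real.exp (3/4 * s^2 * k)) := by ring
    _ ≤ (4 / ε) * Real.exp (-(ε ^ 2 / 8) * k) := by
        refine mul_le_mul h24 hexp (by positivity) (by positivity)
end
end

section
/- Let (Ω_1, μ_1), …, (Ω_n, μ_n) be discrete probability spaces and let (Ω = ∏_i Ω_i, μ = ∏_i μ_i) be their product. For every ε > 0, every k ∈ ℕ, and every function f : Ω → [0,1], the probability that |E_{∏_i μ_i^{(k)}}[f] − E_μ[f]| > ε is at most (4/ε)·e^{−(ε²/8)k}, where for each i, μ_i^{(k)} is the (random) k-sample empirical approximation of μ_i, i.e., μ_i^{(k)} = (1/k)∑_{l=1}^k δ_{x_l^i} with all random variables {x_l^i : i ∈ [n], l ∈ [k]} independent and x_l^i distributed according to μ_i, and E_{∏_i μ_i^{(k)}}[f] denotes the expectation of f under the product of the random empirical measures μ_1^{(k)}, …, μ_n^{(k)}.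 -/
open Finset

open scoped Classical

noncomputable section

/-- The `k`-sample empirical distribution of the samples `s : Fin k → B`. -/
def empDist {B : Type*} [Fintype B] (k : ℕ) (s : Fin k → B) : B → ℝ :=
  fun b => ((univ.filter fun l => s l = b).card : ℝ) / k

namespace Stmt4Aux

lemma empDist_nonneg {B : Type*} [Fintype B] (k : ℕ) (s : Fin k → B) (b : B) :
    0 ≤ empDist k s b := by
  unfold empDist; positivity

lemma sum_empDist_le_one {B : Type*} [Fintype B] (k : ℕ) (s : Fin k → B) :
    ∑ b, empDist k s b ≤ 1 := by
  unfold empDist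
  rw [← Finset.sum_div]
  have h1 : ∑ b, ((univ.filter fun l => s l = b).card : ℝ) = (k : ℝ) := by
    rw [← Nat.cast_sum]
    norm_cast
    rw [← Finset.card_eq_sum_card_fiberwise (fun x _ => Finset.mem_univ (s x))]
    simp
  rw [h1]
  rcases eq_or_ne k 0 with h | h
  · simp [h]
  · rw [div_self (by exact_mod_cast h)]

lemma expect_bounds {A : Type*} [Fintype A] {p g : A → ℝ} (hp0 : ∀ a, 0 ≤ p a)
    (hp1 : ∑ a, p a ≤ 1) (hg : ∀ a, 0 ≤ g a ∧ g a ≤ 1) :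
    0 ≤ ∑ a, p a * g a ∧ ∑ a, p a * g a ≤ 1 := by
  constructor
  · exact Finset.sum_nonneg fun a _ => mul_nonneg (hp0 a) (hg a).1
  · calc ∑ a, p a * g a ≤ ∑ a, p a * 1 :=
          Finset.sum_le_sum fun a _ => mul_le_mul_of_nonneg_left (hg a).2 (hp0 a)
      _ ≤ 1 := by simpa using hp1

lemma exp_mul_le {x : ℝ} (u : ℝ) (hx0 : 0 ≤ x) (hx1 : x ≤ 1) :
    Real.exp (u * x) ≤ 1 - x + x * Real.exp u := by
  have h := convexOn_exp.2 (Set.mem_univ (0:ℝ)) (Set.mem_univ u)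
    (sub_nonneg.2 hx1) hx0 (by ring)
  simp only [smul_eq_mul, mul_zero, zero_add, Real.exp_zero, mul_one] at h
  rw [mul_comm]
  exact h

lemma exp_quad {u : ℝ} (hu : |u| ≤ 1) : Real.exp u - 1 - u ≤ u ^ 2 := by
  have h := Real.exp_bound hu (by norm_num : 0 < 2)
  have hs : ∑ m ∈ Finset.range 2, u ^ m / m.factorial = 1 + u := by
    simp [Finset.sum_range_succ]
  rw [hs] at h
  have h2 : |u| ^ 2 = u ^ 2 := sq_abs u
  have h3 : ((2:ℕ).succ : ℝ) / ((2:ℕ).factorial * (2:ℕ)) = 3 / 4 := by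
    norm_num [Nat.factorial]
  rw [h2, h3] at h
  have := (abs_le.mp h).2
  nlinarith [sq_nonneg u]

lemma mgf_le {A : Type*} [Fintype A] {p g : A → ℝ} (hp : IsDist p)
    (hg : ∀ a, 0 ≤ g a ∧ g a ≤ 1) {u : ℝ} (hu : |u| ≤ 1) :
    ∑ a, p a * Real.exp (u * (g a - ∑ b, p b * g b)) ≤ Real.exp (u ^ 2) := by
  set m := ∑ b, p b * g b with hm
  obtain ⟨hm0, hm1⟩ := expect_bounds hp.1 hp.2.le hg
  have step1 : ∑ a, p a * Real.exp (u * (g a - m))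
      = Real.exp (-(u * m)) * ∑ a, p a * Real.exp (u * g a) := by
    rw [Finset.mul_sum]
    refine Finset.sum_congr rfl fun a _ => ?_
    rw [show u * (g a - m) = -(u * m) + u * g a by ring, Real.exp_add]
    ring
  have step2 : ∑ a, p a * Real.exp (u * g a) ≤ 1 - m + m * Real.exp u := by
    have expand : ∑ a, p a * (1 - g a + g a * Real.exp u)
        = 1 - m + m * Real.exp u := by
      have e : ∀ a : A, p a * (1 - g a + g a * Real.exp u)
          = p a - p a * g a + p a * g a * Real.exp u := fun a => by ring
      simp only [e]
      rw [Finset.sum_add_distrib, Finset.sum_sub_distrib, hp.2, ← Finset.sum_mul, ← hm]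
    calc ∑ a, p a * Real.exp (u * g a)
        ≤ ∑ a, p a * (1 - g a + g a * Real.exp u) :=
          Finset.sum_le_sum fun a _ =>
            mul_le_mul_of_nonneg_left (exp_mul_le u (hg a).1 (hg a).2) (hp.1 a)
      _ = 1 - m + m * Real.exp u := expand
  have step3 : 1 - m + m * Real.exp u ≤ Real.exp (m * (Real.exp u - 1)) := by
    have := Real.add_one_le_exp (m * (Real.exp u - 1))
    nlinarith
  have step4 : Real.exp (-(u * m)) * Real.exp (m * (Real.exp u - 1))
      = Real.exp (m * (Real.exp u - 1 - u)) := by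
    rw [← Real.exp_add]; ring_nf
  have step5 : m * (Real.exp u - 1 - u) ≤ u ^ 2 := by
    have h1 : 0 ≤ Real.exp u - 1 - u := by
      have := Real.add_one_le_exp u; linarith
    nlinarith [exp_quad hu]
  calc ∑ a, p a * Real.exp (u * (g a - m))
      = Real.exp (-(u * m)) * ∑ a, p a * Real.exp (u * g a) := step1
    _ ≤ Real.exp (-(u * m)) * (1 - m + m * Real.exp u) :=
        mul_le_mul_of_nonneg_left step2 (Real.exp_pos _).le
    _ ≤ Real.exp (-(u * m)) * Real.exp (m * (Real.exp u - 1)) :=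
        mul_le_mul_of_nonneg_left step3 (Real.exp_pos _).le
    _ = Real.exp (m * (Real.exp u - 1 - u)) := step4
    _ ≤ Real.exp (u ^ 2) := Real.exp_le_exp.2 step5

lemma prod_ite_eq_ite {n : ℕ} {κ : Fin n → Type*} [∀ i, Fintype (κ i)] (a b : ∀ i, κ i) :
    (∏ i, if a i = b i then (1:ℝ) else 0) = if a = b then 1 else 0 := by
  by_cases h : a = b
  · subst h; simp
  · rw [if_neg h]
    obtain ⟨i, hi⟩ : ∃ i, a i ≠ b i := by
      by_contra hc; push_neg at hc; exact h (funext hc)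
    exact Finset.prod_eq_zero (Finset.mem_univ i) (if_neg hi)

lemma chernoff_pointwise {d w ε u : ℝ} (hw : 0 ≤ w) (hu : 0 ≤ u) :
    (if |d| > ε then w else 0) ≤
      Real.exp (-(u * ε)) * (w * Real.exp (u * d) + w * Real.exp (-u * d)) := by
  have h1 : 0 ≤ w * Real.exp (u * d) := mul_nonneg hw (Real.exp_pos _).le
  have h2 : 0 ≤ w * Real.exp (-u * d) := mul_nonneg hw (Real.exp_pos _).le
  have hep : (0:ℝ) ≤ Real.exp (-(u * ε)) := (Real.exp_pos _).le
  split_ifs with h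
  · rcases lt_abs.mp h with h' | h'
    · have hee : Real.exp (u * ε) ≤ Real.exp (u * d) :=
        Real.exp_le_exp.2 (mul_le_mul_of_nonneg_left h'.le hu)
      have hkey : w ≤ Real.exp (-(u * ε)) * (w * Real.exp (u * d)) := by
        calc w = Real.exp (-(u * ε)) * (w * Real.exp (u * ε)) := by
              rw [mul_comm w, ← mul_assoc, ← Real.exp_add]; simp
          _ ≤ Real.exp (-(u * ε)) * (w * Real.exp (u * d)) := by
              apply mul_le_mul_of_nonneg_left _ hep
              exact mul_le_mul_of_nonneg_left hee hw
      nlinarith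
    · have hee : Real.exp (u * ε) ≤ Real.exp (-u * d) := by
        apply Real.exp_le_exp.2
        have := mul_le_mul_of_nonneg_left h'.le hu
        nlinarith
      have hkey : w ≤ Real.exp (-(u * ε)) * (w * Real.exp (-u * d)) := by
        calc w = Real.exp (-(u * ε)) * (w * Real.exp (u * ε)) := by
              rw [mul_comm w, ← mul_assoc, ← Real.exp_add]; simp
          _ ≤ Real.exp (-(u * ε)) * (w * Real.exp (-u * d)) := by
              apply mul_le_mul_of_nonneg_left _ hep
              exact mul_le_mul_of_nonneg_left hee hw
      nlinarith
  · exact mul_nonneg hep (add_nonneg h1 h2)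

lemma sum_prod_pi_eq_one {n : ℕ} {Ω : Fin n → Type*} [∀ i, Fintype (Ω i)]
    {μ : ∀ i, Ω i → ℝ} (hμ : ∀ i, IsDist (μ i)) (k : ℕ) :
    ∑ xs : ∀ i, Fin k → Ω i, ∏ i, ∏ l, μ i (xs i l) = 1 := by
  rw [← Fintype.prod_sum (f := fun i (s : Fin k → Ω i) => ∏ l, μ i (s l))]
  refine Finset.prod_eq_one fun i _ => ?_
  rw [← Fintype.prod_sum (f := fun (_ : Fin k) (b : Ω i) => μ i b)]
  exact Finset.prod_eq_one fun l _ => (hμ i).2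

lemma isDist_pi {n : ℕ} {Ω : Fin n → Type*} [∀ i, Fintype (Ω i)]
    {μ : ∀ i, Ω i → ℝ} (hμ : ∀ i, IsDist (μ i)) :
    IsDist (fun ω : ∀ i, Ω i => ∏ i, μ i (ω i)) := by
  constructor
  · exact fun ω => Finset.prod_nonneg fun i _ => (hμ i).1 _
  · rw [← Fintype.prod_sum]
    exact Finset.prod_eq_one fun i _ => (hμ i).2


/-- Step A: the empirical expectation is the average over all selectors. -/
lemma stepA {n k : ℕ} (hk : k ≠ 0) {Ω : Fin n → Type*} [∀ i, Fintype (Ω i)]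
    (f : (∀ i, Ω i) → ℝ) (xs : ∀ i, Fin k → Ω i) :
    ∑ ω : ∀ i, Ω i, (∏ i, empDist k (xs i) (ω i)) * f ω
      = (∑ l : Fin n → Fin k, f fun i => xs i (l i)) / (k:ℝ) ^ n := by
  have hemp : ∀ (i : Fin n) (b : Ω i),
      empDist k (xs i) b = (∑ t : Fin k, if xs i t = b then (1:ℝ) else 0) / k := by
    intro i b
    unfold empDist
    congr 1
    rw [Finset.card_filter]
    push_cast
    rfl
  calc ∑ ω : ∀ i, Ω i, (∏ i, empDist k (xs i) (ω i)) * f ω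
      = ∑ ω : ∀ i, Ω i,
          ((∑ l : Fin n → Fin k, ∏ i, if xs i (l i) = ω i then (1:ℝ) else 0) * f ω)
            / (k:ℝ) ^ n := by
        refine Finset.sum_congr rfl fun ω _ => ?_
        simp only [hemp]
        rw [Finset.prod_div_distrib, Finset.prod_const, card_univ, Fintype.card_fin,
          Fintype.prod_sum (f := fun i (t : Fin k) => if xs i t = ω i then (1:ℝ) else 0),
          div_mul_eq_mul_div]
    _ = (∑ ω : ∀ i, Ω i,
          ∑ l : Fin n → Fin k, (∏ i, if xs i (l i) = ω i then (1:ℝ) else 0) * f ω)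
            / (k:ℝ) ^ n := by
        rw [← Finset.sum_div]
        refine congrArg (· / ((k:ℝ)^n)) (Finset.sum_congr rfl fun ω _ => ?_)
        rw [Finset.sum_mul]
    _ = (∑ l : Fin n → Fin k, f fun i => xs i (l i)) / (k:ℝ) ^ n := by
        rw [Finset.sum_comm]
        refine congrArg (· / ((k:ℝ)^n)) (Finset.sum_congr rfl fun l _ => ?_)
        calc ∑ ω : ∀ i, Ω i, (∏ i, if xs i (l i) = ω i then (1:ℝ) else 0) * f ω
            = ∑ ω : ∀ i, Ω i, (if (fun i => xs i (l i)) = ω then (1:ℝ) else 0) * f ω := by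
              refine Finset.sum_congr rfl fun ω _ => ?_
              rw [prod_ite_eq_ite (fun i => xs i (l i)) ω]
          _ = f fun i => xs i (l i) := by
              simp [ite_mul]

/-- Step C: the MGF of a single diagonal class factorises and is bounded. -/
lemma stepC {n k : ℕ} [NeZero k] {Ω : Fin n → Type*} [∀ i, Fintype (Ω i)]
    (μ : ∀ i, Ω i → ℝ) (hμ : ∀ i, IsDist (μ i))
    (f : (∀ i, Ω i) → ℝ) (hf : ∀ ω, 0 ≤ f ω ∧ f ω ≤ 1)
    {u : ℝ} (hu : |u| ≤ 1) (l : Fin n → Fin k) :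
    ∑ xs : ∀ i, Fin k → Ω i, (∏ i, ∏ t, μ i (xs i t)) *
        Real.exp (u * ∑ t : Fin k,
          (f (fun i => xs i (l i + t)) - ∑ ω : ∀ i, Ω i, (∏ i, μ i (ω i)) * f ω))
      ≤ Real.exp ((k:ℝ) * u ^ 2) := by
  set Ef : ℝ := ∑ ω : ∀ i, Ω i, (∏ i, μ i (ω i)) * f ω with hEf
  set Φ : (∀ i, Ω i) → ℝ := fun a => (∏ i, μ i (a i)) * Real.exp (u * (f a - Ef)) with hΦ
  have step1 : ∀ xs : ∀ i, Fin k → Ω i,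
      (∏ i, ∏ t, μ i (xs i t)) *
        Real.exp (u * ∑ t : Fin k, (f (fun i => xs i (l i + t)) - Ef))
      = ∏ t : Fin k, Φ (fun i => xs i (l i + t)) := by
    intro xs
    rw [hΦ]
    simp only []
    rw [Finset.prod_mul_distrib, Finset.mul_sum, Real.exp_sum]
    congr 1
    calc ∏ i, ∏ t, μ i (xs i t)
        = ∏ i, ∏ t, μ i (xs i (l i + t)) := by
          refine Finset.prod_congr rfl fun i _ => ?_
          exact (Fintype.prod_equiv (Equiv.addLeft (l i))
            (fun t => μ i (xs i (l i + t))) (fun t => μ i (xs i t))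
            (fun t => by simp)).symm
      _ = ∏ t, ∏ i, μ i (xs i (l i + t)) := Finset.prod_comm
  have hbij : Function.Bijective
      (fun (xs : ∀ i, Fin k → Ω i) => (fun i t => xs i (l i + t) : ∀ i, Fin k → Ω i)) := by
    rw [Function.bijective_iff_has_inverse]
    refine ⟨fun ys i t => ys i (t - l i), fun xs => ?_, fun ys => ?_⟩
    · funext i t
      show xs i (l i + (t - l i)) = xs i t
      congr 1
      rw [add_comm, sub_add_cancel]
    · funext i t
      show ys i (l i + t - l i) = ys i t
      congr 1
      rw [add_sub_cancel_left]
  have hsw : Function.Bijective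
      (fun (z : Fin k → ∀ i, Ω i) => (fun i t => z t i : ∀ i, Fin k → Ω i)) :=
    Function.bijective_iff_has_inverse.mpr ⟨fun ys t i => ys i t, fun z => rfl, fun ys => rfl⟩
  calc ∑ xs : ∀ i, Fin k → Ω i, (∏ i, ∏ t, μ i (xs i t)) *
        Real.exp (u * ∑ t : Fin k, (f (fun i => xs i (l i + t)) - Ef))
      = ∑ xs : ∀ i, Fin k → Ω i, ∏ t : Fin k, Φ (fun i => xs i (l i + t)) :=
        Finset.sum_congr rfl fun xs _ => step1 xs
    _ = ∑ ys : ∀ i, Fin k → Ω i, ∏ t : Fin k, Φ (fun i => ys i t) :=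
        Fintype.sum_bijective _ hbij _ _ (fun xs => rfl)
    _ = ∑ z : Fin k → ∀ i, Ω i, ∏ t : Fin k, Φ (z t) :=
        (Fintype.sum_bijective _ hsw _ _ (fun z => rfl)).symm
    _ = (∑ a : ∀ i, Ω i, Φ a) ^ k := (Fintype.sum_pow Φ k).symm
    _ ≤ Real.exp (u ^ 2) ^ k := by
        apply pow_le_pow_left₀
        · exact Finset.sum_nonneg fun a _ =>
            mul_nonneg (Finset.prod_nonneg fun i _ => (hμ i).1 _) (Real.exp_pos _).le
        · exact mgf_le (isDist_pi hμ) hf hu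
    _ = Real.exp ((k:ℝ) * u ^ 2) := (Real.exp_nat_mul _ k).symm



/-- Step D: MGF bound for the deviation of the empirical product expectation. -/
lemma stepD {n k : ℕ} (hk : k ≠ 0) {Ω : Fin n → Type*} [∀ i, Fintype (Ω i)]
    (μ : ∀ i, Ω i → ℝ) (hμ : ∀ i, IsDist (μ i))
    (f : (∀ i, Ω i) → ℝ) (hf : ∀ ω, 0 ≤ f ω ∧ f ω ≤ 1)
    (c : ℝ) (hc : |c| ≤ (k:ℝ)) :
    ∑ xs : ∀ i, Fin k → Ω i, (∏ i, ∏ t, μ i (xs i t)) *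
      Real.exp (c * ((∑ ω : ∀ i, Ω i, (∏ i, empDist k (xs i) (ω i)) * f ω)
        - ∑ ω : ∀ i, Ω i, (∏ i, μ i (ω i)) * f ω))
    ≤ Real.exp (c ^ 2 / k) := by
  haveI : NeZero k := ⟨hk⟩
  have hkR : (0:ℝ) < (k:ℝ) := by exact_mod_cast Nat.pos_of_ne_zero hk
  have hknR : (0:ℝ) < (k:ℝ) ^ n := pow_pos hkR n
  have hkne : (k:ℝ) ≠ 0 := hkR.ne'
  have hknne : (k:ℝ) ^ n ≠ 0 := hknR.ne'
  set Ef : ℝ := ∑ ω : ∀ i, Ω i, (∏ i, μ i (ω i)) * f ω with hEf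
  set u : ℝ := c / k with hu_def
  have hu : |u| ≤ 1 := by
    rw [hu_def, abs_div, abs_of_pos hkR]
    exact (div_le_one hkR).2 hc
  set W : (∀ i, Fin k → Ω i) → ℝ := fun xs => ∏ i, ∏ t, μ i (xs i t) with hWdef
  have hW : ∀ xs, 0 ≤ W xs :=
    fun xs => Finset.prod_nonneg fun i _ => Finset.prod_nonneg fun t _ => (hμ i).1 _
  have hcard : ((Fintype.card (Fin n → Fin k) : ℕ) : ℝ) = (k:ℝ) ^ n := by
    simp [Fintype.card_fun]
  have hwsum : ∑ _l : Fin n → Fin k, (1 / (k:ℝ)^n) = 1 := by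
    rw [Finset.sum_const, card_univ, nsmul_eq_mul, hcard]
    field_simp
  have hrep : ∀ xs : ∀ i, Fin k → Ω i,
      c * ((∑ ω : ∀ i, Ω i, (∏ i, empDist k (xs i) (ω i)) * f ω) - Ef)
      = ∑ l : Fin n → Fin k, (1 / (k:ℝ)^n) *
          (u * ∑ t : Fin k, (f (fun i => xs i (l i + t)) - Ef)) := by
    intro xs
    rw [stepA hk f xs]
    have swap : ∀ t : Fin k, ∑ l : Fin n → Fin k, f (fun i => xs i (l i + t))
        = ∑ l : Fin n → Fin k, f (fun i => xs i (l i)) := by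
      intro t
      refine Fintype.sum_bijective (fun (l : Fin n → Fin k) => fun i => l i + t)
        ?_ _ _ (fun l => rfl)
      rw [Function.bijective_iff_has_inverse]
      exact ⟨fun l i => l i - t, fun l => funext fun i => by simp,
        fun l => funext fun i => by simp⟩
    have inner : ∀ l : Fin n → Fin k,
        u * ∑ t : Fin k, (f (fun i => xs i (l i + t)) - Ef)
        = u * ((∑ t : Fin k, f (fun i => xs i (l i + t))) - (k:ℝ) * Ef) := by
      intro l
      rw [Finset.sum_sub_distrib, Finset.sum_const, card_univ, Fintype.card_fin,
        nsmul_eq_mul]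
    simp only [inner, mul_sub, Finset.mul_sum]
    rw [Finset.sum_sub_distrib]
    simp only [← Finset.mul_sum]
    rw [Finset.sum_comm]
    simp only [swap]
    rw [Finset.sum_const, card_univ, Fintype.card_fin, nsmul_eq_mul,
      Finset.sum_const, card_univ]
    simp only [nsmul_eq_mul, hcard]
    field_simp
    linear_combination (c * (k:ℝ)^n * Ef
      - c * (∑ l : Fin n → Fin k, f fun i => xs i (l i))) * (mul_inv_cancel₀ hkne)
  calc ∑ xs : ∀ i, Fin k → Ω i, W xs *
        Real.exp (c * ((∑ ω : ∀ i, Ω i, (∏ i, empDist k (xs i) (ω i)) * f ω) - Ef))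
      ≤ ∑ xs : ∀ i, Fin k → Ω i, W xs * ∑ l : Fin n → Fin k, (1 / (k:ℝ)^n) *
          Real.exp (u * ∑ t : Fin k, (f (fun i => xs i (l i + t)) - Ef)) := by
        refine Finset.sum_le_sum fun xs _ => ?_
        rw [hrep xs]
        refine mul_le_mul_of_nonneg_left ?_ (hW xs)
        have h := convexOn_exp.map_sum_le (t := univ)
          (w := fun _ : Fin n → Fin k => 1 / (k:ℝ)^n)
          (p := fun l => u * ∑ t : Fin k, (f (fun i => xs i (l i + t)) - Ef))
          (fun _ _ => by positivity) hwsum (fun _ _ => Set.mem_univ _)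
        simpa [smul_eq_mul] using h
    _ = ∑ xs : ∀ i, Fin k → Ω i, ∑ l : Fin n → Fin k, (1 / (k:ℝ)^n) *
          (W xs * Real.exp (u * ∑ t : Fin k, (f (fun i => xs i (l i + t)) - Ef))) := by
        refine Finset.sum_congr rfl fun xs _ => ?_
        rw [Finset.mul_sum]
        exact Finset.sum_congr rfl fun l _ => by ring
    _ = ∑ l : Fin n → Fin k, ∑ xs : ∀ i, Fin k → Ω i, (1 / (k:ℝ)^n) *
          (W xs * Real.exp (u * ∑ t : Fin k, (f (fun i => xs i (l i + t)) - Ef))) :=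
        Finset.sum_comm
    _ = ∑ l : Fin n → Fin k, (1 / (k:ℝ)^n) *
          ∑ xs : ∀ i, Fin k → Ω i,
            W xs * Real.exp (u * ∑ t : Fin k, (f (fun i => xs i (l i + t)) - Ef)) :=
        Finset.sum_congr rfl fun l _ => (Finset.mul_sum _ _ _).symm
    _ ≤ ∑ l : Fin n → Fin k, (1 / (k:ℝ)^n) * Real.exp ((k:ℝ) * u ^ 2) := by
        refine Finset.sum_le_sum fun l _ => ?_
        refine mul_le_mul_of_nonneg_left ?_ (by positivity)
        exact stepC μ hμ f hf hu l
    _ = Real.exp ((k:ℝ) * u ^ 2) := by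
        rw [← Finset.sum_mul, hwsum, one_mul]
    _ = Real.exp (c ^ 2 / k) := by
        rw [hu_def]
        congr 1
        field_simp


end Stmt4Aux

open Stmt4Aux

/-- Hoeffding's inequality for product distributions.
Let `(Ω i, μ i)`, `i ∈ [n]`, be discrete (finite) probability spaces, and take for each
`i` the random `k`-sample empirical approximation `μᵢ⁽ᵏ⁾` built from independent samples
`xs i 1, …, xs i k ∼ μ i` (all the `n·k` samples independent; the joint weight of the
sample family `xs` is `∏ i ∏ l, μ i (xs i l)`).  For every `f : ∏ Ω i → [0,1]` and
`ε > 0`, the probability that `|E_{∏ᵢ μᵢ⁽ᵏ⁾}[f] − E_{∏ᵢ μᵢ}[f]| > ε` is at most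
`(4/ε)·e^{−(ε²/8)k}`. -/
theorem stmt4 (n k : ℕ) (Ω : Fin n → Type*) [∀ i, Fintype (Ω i)]
    (μ : ∀ i, Ω i → ℝ) (hμ : ∀ i, IsDist (μ i))
    (f : (∀ i, Ω i) → ℝ) (hf : ∀ ω, 0 ≤ f ω ∧ f ω ≤ 1)
    (ε : ℝ) (hε : 0 < ε) :
    (∑ xs : ∀ i, Fin k → Ω i,
        if |(∑ ω : ∀ i, Ω i, (∏ i, empDist k (xs i) (ω i)) * f ω) -
             ∑ ω : ∀ i, Ω i, (∏ i, μ i (ω i)) * f ω| > ε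
        then ∏ i, ∏ l, μ i (xs i l) else 0)
      ≤ 4 / ε * Real.exp (-(ε ^ 2 / 8) * k) := by
  classical
  have hW : ∀ xs : ∀ i, Fin k → Ω i, 0 ≤ ∏ i, ∏ l, μ i (xs i l) :=
    fun xs => Finset.prod_nonneg fun i _ => Finset.prod_nonneg fun l _ => (hμ i).1 _
  have hEb := expect_bounds (isDist_pi hμ).1 (le_of_eq (isDist_pi hμ).2) hf
  by_cases hε1 : 1 < ε
  · -- the indicator is always false since both expectations lie in [0,1]
    have hz : ∀ xs : ∀ i, Fin k → Ω i,
        (if |(∑ ω : ∀ i, Ω i, (∏ i, empDist k (xs i) (ω i)) * f ω) -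
             ∑ ω : ∀ i, Ω i, (∏ i, μ i (ω i)) * f ω| > ε
         then ∏ i, ∏ l, μ i (xs i l) else 0) = 0 := by
      intro xs
      rw [if_neg]
      push_neg
      have hp1 : ∑ ω : ∀ i, Ω i, ∏ i, empDist k (xs i) (ω i) ≤ 1 := by
        rw [← Fintype.prod_sum (f := fun i (b : Ω i) => empDist k (xs i) b)]
        exact Finset.prod_le_one
          (fun i _ => Finset.sum_nonneg fun b _ => empDist_nonneg k (xs i) b)
          (fun i _ => sum_empDist_le_one k (xs i))
      have hFb := expect_bounds
        (p := fun ω : ∀ i, Ω i => ∏ i, empDist k (xs i) (ω i))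
        (fun ω => Finset.prod_nonneg fun i _ => empDist_nonneg k (xs i) (ω i)) hp1 hf
      rw [abs_sub_le_iff]
      constructor <;> linarith [hFb.1, hFb.2, hEb.1, hEb.2]
    rw [Finset.sum_eq_zero fun xs _ => hz xs]
    exact mul_nonneg (div_nonneg (by norm_num) hε.le) (Real.exp_pos _).le
  push_neg at hε1
  rcases eq_or_ne k 0 with hk0 | hk
  · -- k = 0 : the total mass is 1 and the right-hand side is 4/ε ≥ 4
    subst hk0
    have h1 : (∑ xs : ∀ i, Fin 0 → Ω i,
        if |(∑ ω : ∀ i, Ω i, (∏ i, empDist 0 (xs i) (ω i)) * f ω) -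
             ∑ ω : ∀ i, Ω i, (∏ i, μ i (ω i)) * f ω| > ε
        then ∏ i, ∏ l, μ i (xs i l) else 0)
        ≤ ∑ xs : ∀ i, Fin 0 → Ω i, ∏ i, ∏ l, μ i (xs i l) := by
      refine Finset.sum_le_sum fun xs _ => ?_
      split_ifs with h
      exacts [le_rfl, hW xs]
    rw [sum_prod_pi_eq_one hμ 0] at h1
    refine h1.trans ?_
    rw [Nat.cast_zero, mul_zero, Real.exp_zero, mul_one]
    rw [le_div_iff₀ hε]
    linarith
  · -- main case
    have hkR : (0:ℝ) < (k:ℝ) := by exact_mod_cast Nat.pos_of_ne_zero hk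
    set c : ℝ := (k:ℝ) * ε / 2 with hc_def
    have hc0 : 0 ≤ c := by positivity
    have hcabs : |c| ≤ (k:ℝ) := by
      rw [abs_of_nonneg hc0, hc_def]
      nlinarith
    have hcabs' : |(-c)| ≤ (k:ℝ) := by rwa [abs_neg]
    have hD1 := stepD hk μ hμ f hf c hcabs
    have hD2 := stepD hk μ hμ f hf (-c) hcabs'
    calc (∑ xs : ∀ i, Fin k → Ω i,
        if |(∑ ω : ∀ i, Ω i, (∏ i, empDist k (xs i) (ω i)) * f ω) -
             ∑ ω : ∀ i, Ω i, (∏ i, μ i (ω i)) * f ω| > ε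
        then ∏ i, ∏ l, μ i (xs i l) else 0)
        ≤ ∑ xs : ∀ i, Fin k → Ω i, Real.exp (-(c * ε)) *
            ((∏ i, ∏ l, μ i (xs i l)) * Real.exp (c *
              ((∑ ω : ∀ i, Ω i, (∏ i, empDist k (xs i) (ω i)) * f ω) -
                ∑ ω : ∀ i, Ω i, (∏ i, μ i (ω i)) * f ω)) +
             (∏ i, ∏ l, μ i (xs i l)) * Real.exp (-c *
              ((∑ ω : ∀ i, Ω i, (∏ i, empDist k (xs i) (ω i)) * f ω) -
                ∑ ω : ∀ i, Ω i, (∏ i, μ i (ω i)) * f ω))) :=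
          Finset.sum_le_sum fun xs _ => chernoff_pointwise (hW xs) hc0
      _ = Real.exp (-(c * ε)) *
            ((∑ xs : ∀ i, Fin k → Ω i, (∏ i, ∏ l, μ i (xs i l)) * Real.exp (c *
              ((∑ ω : ∀ i, Ω i, (∏ i, empDist k (xs i) (ω i)) * f ω) -
                ∑ ω : ∀ i, Ω i, (∏ i, μ i (ω i)) * f ω))) +
             ∑ xs : ∀ i, Fin k → Ω i, (∏ i, ∏ l, μ i (xs i l)) * Real.exp (-c *
              ((∑ ω : ∀ i, Ω i, (∏ i, empDist k (xs i) (ω i)) * f ω) -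
                ∑ ω : ∀ i, Ω i, (∏ i, μ i (ω i)) * f ω))) := by
          rw [← Finset.mul_sum, Finset.sum_add_distrib]
      _ ≤ Real.exp (-(c * ε)) * (Real.exp (c ^ 2 / k) + Real.exp ((-c) ^ 2 / k)) :=
          mul_le_mul_of_nonneg_left (add_le_add hD1 hD2) (Real.exp_pos _).le
      _ = 2 * Real.exp (-(c * ε) + c ^ 2 / (k:ℝ)) := by
          rw [neg_sq, ← two_mul, mul_left_comm, ← Real.exp_add]
      _ ≤ 4 / ε * Real.exp (-(ε ^ 2 / 8) * k) := by
          have h1 : -(c * ε) + c ^ 2 / (k:ℝ) = -((k:ℝ) * ε ^ 2 / 4) := by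
            rw [hc_def]
            field_simp
            ring
          have harg : -(c * ε) + c ^ 2 / (k:ℝ) ≤ -(ε ^ 2 / 8) * k := by
            rw [h1]
            nlinarith [sq_nonneg ε, hkR.le]
          have h2 : (2:ℝ) ≤ 4 / ε := by
            rw [le_div_iff₀ hε]
            nlinarith
          exact mul_le_mul h2 (Real.exp_le_exp.2 harg) (Real.exp_pos _).le
            (div_nonneg (by norm_num) hε.le)
end
end

section
/- Let x ∈ Δ(A) be a coarse correlated equilibrium of an n-player m-action game and let ε, α ∈ (0,1). If k > (2/ε²)(ln m + ln n − ln α), then the empirical distribution s^k of k i.i.d. samples from x is an ε-coarse correlated equilibrium with probability greater than 1 − α. -/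
open Finset

open scoped Classical

noncomputable section

/-- Empirical distribution of `k` sampled elements of `A`. -/
def empJoint {A : Type*} [Fintype A] [DecidableEq A] (k : ℕ) (a : Fin k → A) : A → ℝ :=
  fun p => ((univ.filter fun t => a t = p).card : ℝ) / k

/-- Probability of the event `E` over `k` i.i.d. samples from the distribution `x`. -/
def PrJoint {A : Type*} [Fintype A] (k : ℕ) (x : A → ℝ) (E : (Fin k → A) → Prop) : ℝ :=
  ∑ a : Fin k → A, if E a then ∏ t, x (a t) else 0

/-- `x ∈ Δ(A)` is an `ε`-coarse correlated equilibrium of the game `u`: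
for every player `i` and action `j`, the expected regret for not playing `j`
is at most `ε`. -/
def IsCCE {n m : ℕ} (u : Fin n → (Fin n → Fin m) → ℝ)
    (x : (Fin n → Fin m) → ℝ) (ε : ℝ) : Prop :=
  ∀ (i : Fin n) (j : Fin m),
    ∑ a : Fin n → Fin m, x a * (u i (Function.update a i j) - u i a) ≤ ε

/-- `x ∈ Δ(A)` is an `ε`-correlated equilibrium of the game `u`:
for every player `i` and deviation map `f : [m] → [m]`, the expected regret is
at most `ε`. -/
def IsCE {n m : ℕ} (u : Fin n → (Fin n → Fin m) → ℝ)
    (x : (Fin n → Fin m) → ℝ) (ε : ℝ) : Prop :=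
  ∀ (i : Fin n) (f : Fin m → Fin m),
    ∑ a : Fin n → Fin m, x a * (u i (Function.update a i (f (a i))) - u i a) ≤ ε

/-- A distribution on a finite set is `k`-uniform if every probability is an integer
multiple of `1/k` (equivalently, it is uniform over a size-`k` multiset). -/
def IsKUniform {A : Type*} [Fintype A] (k : ℕ) (x : A → ℝ) : Prop :=
  ∀ a, ∃ c : ℕ, x a = (c : ℝ) / k
section Aux
variable {A : Type*} [Fintype A] {x : A → ℝ} {k : ℕ}

lemma weight_nonneg (hx : ∀ b, 0 ≤ x b) (a : Fin k → A) : 0 ≤ ∏ t, x (a t) :=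
  Finset.prod_nonneg fun t _ => hx (a t)

lemma prjoint_nonneg (hx : ∀ b, 0 ≤ x b) (E : (Fin k → A) → Prop) :
    0 ≤ PrJoint k x E :=
  Finset.sum_nonneg fun a _ => by
    by_cases h : E a <;> simp [PrJoint, h, weight_nonneg hx a]

lemma prjoint_mono (hx : ∀ b, 0 ≤ x b) {E F : (Fin k → A) → Prop}
    (h : ∀ a, E a → F a) : PrJoint k x E ≤ PrJoint k x F := by
  refine Finset.sum_le_sum fun a _ => ?_
  by_cases hE : E a
  · simp [hE, h a hE]
  · by_cases hF : F a <;> simp [hE, hF, weight_nonneg hx a]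

lemma prjoint_compl (hx : IsDist x) (E : (Fin k → A) → Prop) :
    PrJoint k x E = 1 - PrJoint k x (fun a => ¬ E a) := by
  have htot : ∑ a : Fin k → A, ∏ t, x (a t) = 1 := by
    rw [← Fintype.sum_pow x k, hx.2, one_pow]
  rw [eq_sub_iff_add_eq, ← htot, PrJoint, PrJoint, ← Finset.sum_add_distrib]
  refine Finset.sum_congr rfl fun a _ => ?_
  by_cases h : E a <;> simp [h]

lemma prjoint_union {ι : Type*} [Fintype ι] (hx : ∀ b, 0 ≤ x b)
    (E : ι → (Fin k → A) → Prop) :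
    PrJoint k x (fun a => ∃ i, E i a) ≤ ∑ i, PrJoint k x (E i) := by
  rw [PrJoint]
  have : ∑ i, PrJoint k x (E i)
      = ∑ a : Fin k → A, ∑ i, if E i a then ∏ t, x (a t) else 0 := by
    rw [Finset.sum_comm]; rfl
  rw [this]
  refine Finset.sum_le_sum fun a _ => ?_
  by_cases h : ∃ i, E i a
  · rw [if_pos h]
    obtain ⟨i0, hi0⟩ := h
    calc (∏ t, x (a t)) = (if E i0 a then ∏ t, x (a t) else 0) := by simp [hi0]
      _ ≤ ∑ i, if E i a then ∏ t, x (a t) else 0 :=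
        Finset.single_le_sum (f := fun i => if E i a then ∏ t, x (a t) else 0)
          (fun i _ => by
            by_cases hE : E i a
            · rw [if_pos hE]; exact weight_nonneg hx a
            · rw [if_neg hE]) (mem_univ i0)
  · simp only [h, if_false]
    exact Finset.sum_nonneg fun i _ => by
      by_cases hE : E i a <;> simp [hE, weight_nonneg hx a]

lemma exp_le_cosh_add {z ε : ℝ} (hz : -1 ≤ z) (hz' : z ≤ 1) :
    Real.exp (ε * z) ≤ Real.cosh ε + z * Real.sinh ε := by
  have h := convexOn_exp.2 (Set.mem_univ (-ε)) (Set.mem_univ ε)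
    (by linarith : (0:ℝ) ≤ (1 - z)/2) (by linarith : (0:ℝ) ≤ (1 + z)/2) (by ring)
  simp only [smul_eq_mul] at h
  have harg : (1 - z)/2 * (-ε) + (1 + z)/2 * ε = ε * z := by ring
  rw [harg] at h
  rw [Real.cosh_eq, Real.sinh_eq]
  calc Real.exp (ε * z) ≤ (1 - z)/2 * Real.exp (-ε) + (1 + z)/2 * Real.exp ε := h
    _ = (Real.exp ε + Real.exp (-ε)) / 2 + z * ((Real.exp ε - Real.exp (-ε)) / 2) := by ring

/-- Chernoff bound for a bounded, nonpositive-mean observable. -/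
lemma chernoff (hx : IsDist x) (g : A → ℝ) (hg : ∀ b, -1 ≤ g b ∧ g b ≤ 1)
    (hmean : ∑ b, x b * g b ≤ 0) {ε : ℝ} (hε : 0 < ε) :
    PrJoint k x (fun a => ε * k ≤ ∑ t, g (a t)) ≤ Real.exp (-(k * ε ^ 2) / 2) := by
  set M : ℝ := ∑ b, x b * Real.exp (ε * g b) with hM
  have hM0 : 0 ≤ M := Finset.sum_nonneg fun b _ =>
    mul_nonneg (hx.1 b) (Real.exp_nonneg _)
  have hMle : M ≤ Real.exp (ε ^ 2 / 2) := by
    calc M ≤ ∑ b, x b * (Real.cosh ε + g b * Real.sinh ε) :=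
          Finset.sum_le_sum fun b _ => mul_le_mul_of_nonneg_left
            (exp_le_cosh_add (hg b).1 (hg b).2) (hx.1 b)
      _ = Real.cosh ε * ∑ b, x b + Real.sinh ε * ∑ b, x b * g b := by
          rw [Finset.mul_sum, Finset.mul_sum, ← Finset.sum_add_distrib]
          exact Finset.sum_congr rfl fun b _ => by ring
      _ ≤ Real.cosh ε := by
          rw [hx.2, mul_one]
          nlinarith [Real.sinh_pos_iff.2 hε]
      _ ≤ Real.exp (ε ^ 2 / 2) := Real.cosh_le_exp_half_sq ε
  calc PrJoint k x (fun a => ε * k ≤ ∑ t, g (a t))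
      ≤ ∑ a : Fin k → A, (∏ t, x (a t)) * Real.exp (ε * (∑ t, g (a t)) - k * ε ^ 2) := by
        refine Finset.sum_le_sum fun a _ => ?_
        by_cases h : ε * k ≤ ∑ t, g (a t)
        · simp only [h, if_true]
          nth_rewrite 1 [← mul_one (∏ t, x (a t))]
          refine mul_le_mul_of_nonneg_left ?_ (weight_nonneg hx.1 a)
          rw [← Real.exp_zero]
          apply Real.exp_le_exp.2
          nlinarith
        · simp only [h, if_false]
          exact mul_nonneg (weight_nonneg hx.1 a) (Real.exp_nonneg _)
    _ = Real.exp (-(k * ε ^ 2)) * ∑ a : Fin k → A, ∏ t, (x (a t) * Real.exp (ε * g (a t))) := by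
        rw [Finset.mul_sum]
        refine Finset.sum_congr rfl fun a _ => ?_
        rw [Finset.prod_mul_distrib, ← Real.exp_sum]
        rw [show ε * (∑ t, g (a t)) - k * ε ^ 2 = -(k * ε ^ 2) + ∑ t, ε * g (a t) by
          rw [Finset.mul_sum]; ring]
        rw [Real.exp_add]; ring
    _ = Real.exp (-(k * ε ^ 2)) * M ^ k := by
        rw [← Fintype.sum_pow (fun b => x b * Real.exp (ε * g b)) k]
    _ ≤ Real.exp (-(k * ε ^ 2)) * (Real.exp (ε ^ 2 / 2)) ^ k := by
        refine mul_le_mul_of_nonneg_left ?_ (Real.exp_nonneg _)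
        exact pow_le_pow_left₀ hM0 hMle k
    _ = Real.exp (-(k * ε ^ 2) / 2) := by
        rw [← Real.exp_nat_mul, ← Real.exp_add]
        congr 1; ring

end Aux

/-- If `x` is a coarse correlated equilibrium of an `n`-player
`m`-action game, `ε, α ∈ (0,1)`, and `k > (2/ε²)(ln m + ln n − ln α)`, then the
empirical distribution of `k` i.i.d. samples from `x` is an `ε`-coarse correlated
equilibrium with probability greater than `1 − α`. -/
theorem stmt5 {n m : ℕ} (hn : 0 < n) (hm : 0 < m)
    (u : Fin n → (Fin n → Fin m) → ℝ)
    (hu : ∀ i a, 0 ≤ u i a ∧ u i a ≤ 1)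
    (x : (Fin n → Fin m) → ℝ) (hx : IsDist x)
    (hcce : IsCCE u x 0)
    (ε α : ℝ) (hε : 0 < ε ∧ ε < 1) (hα : 0 < α ∧ α < 1)
    (k : ℕ)
    (hk : (k : ℝ) > 2 / ε ^ 2 * (Real.log m + Real.log n - Real.log α)) :
    PrJoint k x (fun a => IsCCE u (empJoint k a) ε) > 1 - α := by
  obtain ⟨hε0, hε1⟩ := hε
  obtain ⟨hα0, hα1⟩ := hα
  set L : ℝ := Real.log m + Real.log n - Real.log α with hLdef
  have hm1 : (1:ℝ) ≤ (m:ℝ) := by exact_mod_cast hm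
  have hn1 : (1:ℝ) ≤ (n:ℝ) := by exact_mod_cast hn
  have hL : 0 < L := by
    have h1 : (0:ℝ) ≤ Real.log m := Real.log_nonneg hm1
    have h2 : (0:ℝ) ≤ Real.log n := Real.log_nonneg hn1
    have h3 : Real.log α < 0 := Real.log_neg hα0 hα1
    simp only [hLdef]; linarith
  have hkpos : (0:ℝ) < k :=
    lt_trans (mul_pos (div_pos two_pos (pow_pos hε0 2)) hL) hk
  -- the regret observable for player i and action j
  set g : Fin n → Fin m → (Fin n → Fin m) → ℝ :=
    fun i j p => u i (Function.update p i j) - u i p with hgdef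
  have hgb : ∀ i j p, -1 ≤ g i j p ∧ g i j p ≤ 1 := by
    intro i j p
    obtain ⟨h1, h2⟩ := hu i (Function.update p i j)
    obtain ⟨h3, h4⟩ := hu i p
    constructor <;> simp only [hgdef] <;> linarith
  -- empirical regret as an average over samples
  have hreg : ∀ (i : Fin n) (j : Fin m) (a : Fin k → (Fin n → Fin m)),
      (∑ p, empJoint k a p * g i j p) = (∑ t, g i j (a t)) / k := by
    intro i j a
    have h1 : (∑ t, g i j (a t))
        = ∑ p, ∑ _t ∈ univ.filter (fun t => a t = p), g i j p :=
      (Finset.sum_fiberwise' univ a (g i j)).symm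
    rw [h1, Finset.sum_div]
    refine Finset.sum_congr rfl fun p _ => ?_
    rw [Finset.sum_const, nsmul_eq_mul, empJoint]
    ring
  -- Chernoff bound for each (i, j)
  have hbad : ∀ p : Fin n × Fin m,
      PrJoint k x (fun a => ¬ (∑ q, empJoint k a q * g p.1 p.2 q ≤ ε))
        ≤ Real.exp (-(k * ε ^ 2) / 2) := by
    rintro ⟨i, j⟩
    refine le_trans (prjoint_mono hx.1 (E := fun a => ¬ (∑ q, empJoint k a q * g i j q ≤ ε))
      (F := fun a => ε * k ≤ ∑ t, g i j (a t)) ?_)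
      (chernoff hx (g i j) (hgb i j) (hcce i j) hε0)
    intro a h
    rw [hreg i j a] at h
    push_neg at h
    exact ((lt_div_iff₀ hkpos).1 h).le
  -- union bound
  have hunion : PrJoint k x (fun a => ¬ IsCCE u (empJoint k a) ε)
      ≤ (n : ℝ) * m * Real.exp (-(k * ε ^ 2) / 2) := by
    calc PrJoint k x (fun a => ¬ IsCCE u (empJoint k a) ε)
        ≤ PrJoint k x (fun a => ∃ p : Fin n × Fin m,
            ¬ (∑ q, empJoint k a q * g p.1 p.2 q ≤ ε)) := by
          refine prjoint_mono hx.1 fun a h => ?_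
          rw [IsCCE] at h
          push_neg at h
          obtain ⟨i, j, hij⟩ := h
          exact ⟨⟨i, j⟩, by push_neg; exact hij⟩
      _ ≤ ∑ p : Fin n × Fin m,
            PrJoint k x (fun a => ¬ (∑ q, empJoint k a q * g p.1 p.2 q ≤ ε)) :=
          prjoint_union hx.1 _
      _ ≤ ∑ _p : Fin n × Fin m, Real.exp (-(k * ε ^ 2) / 2) :=
          Finset.sum_le_sum fun p _ => hbad p
      _ = (n : ℝ) * m * Real.exp (-(k * ε ^ 2) / 2) := by
          rw [Finset.sum_const, Finset.card_univ, Fintype.card_prod,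
            Fintype.card_fin, Fintype.card_fin, nsmul_eq_mul]
          push_cast
          ring
  -- the numeric bound
  have hnum : (n : ℝ) * m * Real.exp (-(k * ε ^ 2) / 2) < α := by
    have hexp : Real.exp (-(k * ε ^ 2) / 2) < Real.exp (-L) := by
      apply Real.exp_lt_exp.2
      have : 2 / ε ^ 2 * L * (ε ^ 2 / 2) = L := by
        field_simp
      nlinarith [mul_lt_mul_of_pos_right hk (by positivity : (0:ℝ) < ε ^ 2 / 2)]
    have hexpL : Real.exp (-L) = α / ((m : ℝ) * n) := by
      have hm0 : (0:ℝ) < m := by linarith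
      have hn0 : (0:ℝ) < n := by linarith
      rw [hLdef, show -(Real.log m + Real.log n - Real.log α)
          = Real.log α - (Real.log m + Real.log n) by ring,
        Real.exp_sub, Real.exp_add, Real.exp_log hα0, Real.exp_log hm0, Real.exp_log hn0]
    have hnm : (0:ℝ) < (n:ℝ) * m := by nlinarith
    calc (n : ℝ) * m * Real.exp (-(k * ε ^ 2) / 2)
        < (n : ℝ) * m * Real.exp (-L) := by
          exact mul_lt_mul_of_pos_left hexp hnm
      _ = α := by rw [hexpL]; field_simp
  rw [prjoint_compl hx]
  have := lt_of_le_of_lt hunion hnum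
  linarith
end
end

section
/- Every n-player m-action game admits a k-uniform distribution on A = [m]^n that is an ε-coarse correlated equilibrium, for every ε ∈ (0,1) and every integer k > (2/ε²)(ln m + ln n). -/
open Finset

open scoped Classical

noncomputable section

/-!
A zero-regret coarse correlated equilibrium `x` exists: by separating the compact convex set of
regret vectors from the nonpositive orthant, it suffices that every nonnegative weighting of the
`n * m` regret constraints is met by some distribution, and the product of the players'
normalized weight vectors has weighted regret exactly zero. Now sample `k` profiles i.i.d. from
`x`. Each regret is `[-1, 1]`-valued with nonpositive mean, so by Hoeffding's bound its empirical
mean exceeds `ε` with probability at most `exp (-k ε² / 2)`; as `k > (2 / ε²) ln (n m)`, a union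
bound over the `n * m` pairs leaves a sample whose empirical distribution, which is `k`-uniform,
is an `ε`-coarse correlated equilibrium.
-/

open Real

section ProductDistribution

variable {ι κ : Type*} [Fintype ι]

def prodDist (q : ι → κ → ℝ) (a : ι → κ) : ℝ :=
  ∏ i, q i (a i)

lemma prodDist_nonneg {q : ι → κ → ℝ} (hq : ∀ i j, 0 ≤ q i j) (a : ι → κ) : 0 ≤ prodDist q a :=
  prod_nonneg fun i _ => hq i (a i)

lemma sum_prodDist [DecidableEq ι] [Fintype κ] {q : ι → κ → ℝ} (hq : ∀ i, ∑ j, q i j = 1) :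
    ∑ a, prodDist q a = 1 := by
  simp [prodDist, ← Fintype.prod_sum, hq]

lemma prodDist_funSplitAt_symm [DecidableEq ι] (q : ι → κ → ℝ) (i : ι) (j : κ)
    (b : {l // l ≠ i} → κ) :
    prodDist q ((Equiv.funSplitAt i κ).symm (j, b)) = q i j * ∏ l : {l // l ≠ i}, q l (b l) := by
  rw [prodDist, Fintype.prod_eq_mul_prod_subtype_ne _ i]
  simp [Equiv.funSplitAt_symm_apply, fun l : {l // l ≠ i} => l.2]

omit [Fintype ι] in
lemma update_funSplitAt_symm_s6 [DecidableEq ι] (i : ι) (j j' : κ) (b : {l // l ≠ i} → κ) :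
    Function.update ((Equiv.funSplitAt i κ).symm (j', b)) i j =
      (Equiv.funSplitAt i κ).symm (j, b) := by
  funext l
  rcases eq_or_ne l i with rfl | h <;> simp [Equiv.funSplitAt_symm_apply, *]

lemma sum_prodDist_mul_eq_sum_mul_sum_update [DecidableEq ι] [Fintype κ] {q : ι → κ → ℝ}
    (hq : ∀ i, ∑ j, q i j = 1) (i : ι) (F : (ι → κ) → ℝ) :
    ∑ a, prodDist q a * F a = ∑ j, q i j * ∑ a, prodDist q a * F (Function.update a i j) := by
  have split : ∀ f : (ι → κ) → ℝ,
      ∑ a, f a = ∑ j, ∑ b, f ((Equiv.funSplitAt i κ).symm (j, b)) := fun f =>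
    (Equiv.sum_comp _ f).symm.trans (Fintype.sum_prod_type _)
  have inner : ∀ j, ∑ a, prodDist q a * F (Function.update a i j) =
      ∑ b, (∏ l : {l // l ≠ i}, q l (b l)) * F ((Equiv.funSplitAt i κ).symm (j, b)) := fun j => by
    rw [split]
    simp_rw [prodDist_funSplitAt_symm, update_funSplitAt_symm_s6, mul_assoc, ← mul_sum, ← sum_mul,
      hq i, one_mul]
  rw [split]
  simp_rw [inner, prodDist_funSplitAt_symm, mul_sum, mul_assoc]

end ProductDistribution

lemma exists_isDist_mul_eq {κ : Type*} [Fintype κ] [Nonempty κ] {w : κ → ℝ} (hw : 0 ≤ w) :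
    ∃ q : κ → ℝ, IsDist q ∧ ∀ j, (∑ j', w j') * q j = w j := by
  by_cases h : ∑ j, w j = 0
  · refine ⟨fun _ => (Fintype.card κ : ℝ)⁻¹, ⟨fun _ => by positivity, ?_⟩, fun j => ?_⟩
    · simp
    · rw [h, zero_mul, (sum_eq_zero_iff_of_nonneg fun j _ => hw j).1 h j (mem_univ j)]
  · refine ⟨fun j => w j / ∑ j', w j', ⟨fun j => div_nonneg (hw j) (sum_nonneg fun j _ => hw j),
      by rw [← sum_div, div_self h]⟩, fun j => mul_div_cancel₀ _ h⟩

lemma exists_nonpos_of_forall_sum_mul_nonpos {ι : Type*} [Fintype ι] {C : Set (ι → ℝ)}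
    (hCc : IsCompact C) (hC : Convex ℝ C)
    (h : ∀ w : ι → ℝ, 0 ≤ w → ∃ c ∈ C, ∑ i, w i * c i ≤ 0) : ∃ c ∈ C, c ≤ 0 := by
  by_contra! hC0
  obtain ⟨f, s, t, hfC, hst, hft⟩ := geometric_hahn_banach_compact_closed hC hCc (convex_Iic 0)
    isClosed_Iic (Set.disjoint_left.2 fun c hc hc0 => hC0 c hc hc0)
  have ht : t < 0 := by simpa using hft 0 (Set.mem_Iic.2 le_rfl)
  set e : ι → ι → ℝ := fun i j => if i = j then 1 else 0
  -- `f` is bounded below on the cone `Iic 0`, so it is nonpositive on its generators `e i ≥ 0`.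
  have hfe : ∀ i, f (e i) ≤ 0 := fun i => by
    by_contra! hpos
    have he : 0 ≤ e i := fun j => by positivity
    have := hft ((t / f (e i)) • e i)
      (smul_nonpos_of_nonpos_of_nonneg (div_nonpos_of_nonpos_of_nonneg ht.le hpos.le) he)
    rw [map_smul, smul_eq_mul, div_mul_cancel₀ _ hpos.ne'] at this
    exact this.false
  obtain ⟨c, hc, hwc⟩ := h (fun i => -f (e i)) fun i => neg_nonneg.2 (hfe i)
  have hfc : f c = -∑ i, -f (e i) * c i := by
    rw [show f c = (f : (ι → ℝ) →ₗ[ℝ] ℝ) c from rfl, LinearMap.pi_apply_eq_sum_univ]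
    simp [e, mul_comm]
  linarith [hfC c hc]

section Game

variable {n m : ℕ}

def regret (u : Fin n → (Fin n → Fin m) → ℝ) (i : Fin n) (j : Fin m) (a : Fin n → Fin m) : ℝ :=
  u i (Function.update a i j) - u i a

lemma abs_regret_le_one {u : Fin n → (Fin n → Fin m) → ℝ} (hu : ∀ i a, 0 ≤ u i a ∧ u i a ≤ 1)
    (i : Fin n) (j : Fin m) (a : Fin n → Fin m) : |regret u i j a| ≤ 1 := by
  have := hu i a
  have := hu i (Function.update a i j)
  rw [regret, abs_le]
  constructor <;> linarith

def regretMap (u : Fin n → (Fin n → Fin m) → ℝ) :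
    ((Fin n → Fin m) → ℝ) →ₗ[ℝ] (Fin n × Fin m → ℝ) where
  toFun x ij := ∑ a, x a * regret u ij.1 ij.2 a
  map_add' x y := by ext; simp [add_mul, sum_add_distrib]
  map_smul' c x := by ext; simp [mul_assoc, mul_sum]

lemma regretMap_prodDist (u : Fin n → (Fin n → Fin m) → ℝ) {q : Fin n → Fin m → ℝ}
    (hq : ∀ i, ∑ j, q i j = 1) (i : Fin n) (j : Fin m) :
    regretMap u (prodDist q) (i, j) =
      ∑ a, prodDist q a * u i (Function.update a i j) -
        ∑ j', q i j' * ∑ a, prodDist q a * u i (Function.update a i j') := by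
  simp only [regretMap, LinearMap.coe_mk, AddHom.coe_mk, regret, mul_sub, sum_sub_distrib]
  rw [sum_prodDist_mul_eq_sum_mul_sum_update hq i (u i)]

/-- Hart–Schmeidler: the witness is the product of the players' normalized weight vectors. -/
lemma exists_mem_stdSimplex_sum_mul_regretMap_eq_zero (hm : 0 < m)
    (u : Fin n → (Fin n → Fin m) → ℝ) {w : Fin n × Fin m → ℝ} (hw : 0 ≤ w) :
    ∃ x ∈ stdSimplex ℝ (Fin n → Fin m), ∑ ij, w ij * regretMap u x ij = 0 := by
  have : Nonempty (Fin m) := ⟨⟨0, hm⟩⟩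
  choose q hq hwq using fun i => exists_isDist_mul_eq (w := fun j => w (i, j)) fun j => hw (i, j)
  refine ⟨prodDist q, ⟨prodDist_nonneg fun i => (hq i).1, sum_prodDist fun i => (hq i).2⟩, ?_⟩
  rw [Fintype.sum_prod_type]
  refine sum_eq_zero fun i _ => ?_
  obtain ⟨W, hW⟩ : ∃ W, ∀ j, w (i, j) = W * q i j := ⟨_, fun j => (hwq i j).symm⟩
  simp_rw [hW, regretMap_prodDist u (fun i => (hq i).2), mul_assoc, ← mul_sum, mul_sub,
    sum_sub_distrib, ← sum_mul, (hq i).2, one_mul, sub_self, mul_zero]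

theorem exists_isCCE_zero (hm : 0 < m) (u : Fin n → (Fin n → Fin m) → ℝ) :
    ∃ x, IsDist x ∧ IsCCE u x 0 := by
  obtain ⟨_, ⟨x, hx, rfl⟩, hx0⟩ := exists_nonpos_of_forall_sum_mul_nonpos
    ((isCompact_stdSimplex ℝ _).image (regretMap u).continuous_of_finiteDimensional)
    ((convex_stdSimplex ℝ _).linear_image (regretMap u)) fun w hw => by
      obtain ⟨x, hx, h0⟩ := exists_mem_stdSimplex_sum_mul_regretMap_eq_zero hm u hw
      exact ⟨_, ⟨x, hx, rfl⟩, h0.le⟩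
  exact ⟨x, hx, fun i j => hx0 (i, j)⟩

end Game

lemma exp_mul_le_cosh_add_mul_sinh {r : ℝ} (hr : |r| ≤ 1) (l : ℝ) :
    exp (l * r) ≤ cosh l + r * sinh l := by
  obtain ⟨hr₁, hr₂⟩ := abs_le.1 hr
  have h := convexOn_exp.2 (Set.mem_univ (-l)) (Set.mem_univ l) (by linarith : 0 ≤ (1 - r) / 2)
    (by linarith : 0 ≤ (1 + r) / 2) (by ring)
  simp only [smul_eq_mul] at h
  calc exp (l * r) = exp ((1 - r) / 2 * -l + (1 + r) / 2 * l) := by ring_nf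
    _ ≤ _ := h
    _ = cosh l + r * sinh l := by rw [cosh_eq, sinh_eq]; ring

section Sampling

variable {α : Type*} [Fintype α] {x : α → ℝ}

/-- Hoeffding's lemma. -/
lemma sum_mul_exp_mul_le_exp_sq_div_two (hx : IsDist x) {r : α → ℝ} (hr : ∀ a, |r a| ≤ 1)
    (hmean : ∑ a, x a * r a ≤ 0) {l : ℝ} (hl : 0 ≤ l) :
    ∑ a, x a * exp (l * r a) ≤ exp (l ^ 2 / 2) :=
  calc ∑ a, x a * exp (l * r a) ≤ ∑ a, x a * (cosh l + r a * sinh l) :=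
        sum_le_sum fun a _ => mul_le_mul_of_nonneg_left (exp_mul_le_cosh_add_mul_sinh (hr a) l)
          (hx.1 a)
    _ = cosh l + (∑ a, x a * r a) * sinh l := by
        simp_rw [mul_add, sum_add_distrib, ← mul_assoc, ← sum_mul, hx.2, one_mul]
    _ ≤ cosh l := by nlinarith [sinh_nonneg_iff.2 hl]
    _ ≤ exp (l ^ 2 / 2) := cosh_le_exp_half_sq l

lemma PrJoint_lt_sum_le_exp (hx : IsDist x) {r : α → ℝ} (hr : ∀ a, |r a| ≤ 1)
    (hmean : ∑ a, x a * r a ≤ 0) {ε : ℝ} (hε : 0 ≤ ε) (k : ℕ) :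
    PrJoint k x (fun v => ε * k < ∑ t, r (v t)) ≤ exp (-(k * ε ^ 2 / 2)) := by
  -- Chernoff: bound the indicator of the event by `exp (ε * (∑ t, r (v t) - ε * k))`.
  calc PrJoint k x (fun v => ε * k < ∑ t, r (v t))
      ≤ ∑ v : Fin k → α, exp (-(k * ε ^ 2)) * ∏ t, x (v t) * exp (ε * r (v t)) := by
        refine sum_le_sum fun v _ => ?_
        have hprod : 0 ≤ ∏ t, x (v t) := prod_nonneg fun t _ => hx.1 _
        rw [prod_mul_distrib, ← exp_sum, mul_left_comm, ← exp_add, ← mul_sum]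
        split_ifs with hv
        · exact le_mul_of_one_le_right hprod (one_le_exp (by nlinarith))
        · positivity
    _ = exp (-(k * ε ^ 2)) * (∑ a, x a * exp (ε * r a)) ^ k := by
        rw [← mul_sum, Fintype.sum_pow]
    _ ≤ exp (-(k * ε ^ 2)) * exp (ε ^ 2 / 2) ^ k := by
        gcongr
        · exact sum_nonneg fun a _ => mul_nonneg (hx.1 a) (exp_pos _).le
        · exact sum_mul_exp_mul_le_exp_sq_div_two hx hr hmean hε
    _ = exp (-(k * ε ^ 2 / 2)) := by
        rw [← exp_nat_mul, ← exp_add]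
        ring_nf

lemma PrJoint_exists_le_sum {k : ℕ} (hx : ∀ a, 0 ≤ x a) {ι : Type*} [Fintype ι]
    (E : ι → (Fin k → α) → Prop) :
    PrJoint k x (fun v => ∃ i, E i v) ≤ ∑ i, PrJoint k x (E i) := by
  simp only [PrJoint]
  rw [sum_comm]
  refine sum_le_sum fun v _ => ?_
  have hprod : 0 ≤ ∏ t, x (v t) := prod_nonneg fun t _ => hx _
  split_ifs with hv
  · obtain ⟨i, hi⟩ := hv
    calc ∏ t, x (v t) = if E i v then ∏ t, x (v t) else 0 := (if_pos hi).symm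
      _ ≤ ∑ i, if E i v then ∏ t, x (v t) else 0 :=
        single_le_sum (f := fun i => if E i v then ∏ t, x (v t) else 0)
          (fun i _ => by positivity) (mem_univ i)
  · exact sum_nonneg fun i _ => by positivity

lemma exists_not_of_PrJoint_lt_one {k : ℕ} (hx : IsDist x) {E : (Fin k → α) → Prop}
    (h : PrJoint k x E < 1) : ∃ v, ¬ E v := by
  by_contra! hE
  simp only [PrJoint, hE, if_true, ← Fintype.sum_pow, hx.2, one_pow, lt_irrefl] at h

lemma sum_empJoint_mul [DecidableEq α] (k : ℕ) (v : Fin k → α) (f : α → ℝ) :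
    ∑ p, empJoint k v p * f p = (∑ t, f (v t)) / k := by
  simp_rw [empJoint, div_mul_eq_mul_div, ← sum_div, ← sum_fiberwise univ v (fun t => f (v t))]
  congr 1
  refine sum_congr rfl fun p _ => ?_
  rw [sum_congr rfl fun t ht => by rw [(mem_filter.1 ht).2], sum_const, nsmul_eq_mul]

lemma isDist_empJoint [DecidableEq α] {k : ℕ} (hk : 0 < k) (v : Fin k → α) :
    IsDist (empJoint k v) :=
  ⟨fun p => by unfold empJoint; positivity, by
    simpa [div_self (Nat.cast_pos.2 hk : (0 : ℝ) < k).ne'] using sum_empJoint_mul k v 1⟩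

end Sampling

lemma mul_lt_exp_of_log_add_log_lt {a b s : ℝ} (ha : 0 ≤ a) (hb : 0 ≤ b)
    (h : log a + log b < s) : a * b < exp s := by
  rcases ha.eq_or_lt with rfl | ha
  · simpa using exp_pos s
  rcases hb.eq_or_lt with rfl | hb
  · simpa using exp_pos s
  rwa [← log_lt_iff_lt_exp (mul_pos ha hb), log_mul ha.ne' hb.ne']

theorem stmt6_general {n m : ℕ} (hm : 0 < m)
    (u : Fin n → (Fin n → Fin m) → ℝ)
    (hu : ∀ i a, 0 ≤ u i a ∧ u i a ≤ 1)
    (ε : ℝ) (hε : 0 < ε ∧ ε < 1)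
    (k : ℕ) (hk : (k : ℝ) > 2 / ε ^ 2 * (Real.log m + Real.log n)) :
    ∃ x : (Fin n → Fin m) → ℝ, IsDist x ∧ IsKUniform k x ∧ IsCCE u x ε := by
  obtain ⟨x, hx, hx0⟩ := exists_isCCE_zero hm u
  have hlog : log m + log n < k * ε ^ 2 / 2 := by
    rw [gt_iff_lt, div_mul_eq_mul_div, div_lt_iff₀ (pow_pos hε.1 2)] at hk
    linarith
  have hk0 : (0 : ℝ) < k := by
    nlinarith [log_natCast_nonneg m, log_natCast_nonneg n, sq_nonneg ε]
  have hbad : PrJoint k x (fun v => ∃ ij : Fin n × Fin m,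
      ε * k < ∑ t, regret u ij.1 ij.2 (v t)) < 1 :=
    calc _ ≤ ∑ ij : Fin n × Fin m, exp (-(k * ε ^ 2 / 2)) :=
          (PrJoint_exists_le_sum hx.1 _).trans <| sum_le_sum fun ij _ =>
            PrJoint_lt_sum_le_exp hx (abs_regret_le_one hu ij.1 ij.2) (hx0 ij.1 ij.2) hε.1.le k
      _ = n * m / exp (k * ε ^ 2 / 2) := by simp [exp_neg, div_eq_mul_inv]
      _ < 1 := (div_lt_one (exp_pos _)).2 <|
          mul_lt_exp_of_log_add_log_lt (Nat.cast_nonneg n) (Nat.cast_nonneg m) (by linarith)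
  obtain ⟨v, hv⟩ := exists_not_of_PrJoint_lt_one hx hbad
  refine ⟨empJoint k v, isDist_empJoint (Nat.cast_pos.1 hk0) v, fun _ => ⟨_, rfl⟩, fun i j => ?_⟩
  calc _ = (∑ t, regret u i j (v t)) / k := sum_empJoint_mul k v (regret u i j)
    _ ≤ ε := (div_le_iff₀ hk0).2 <| not_lt.1 fun h => hv ⟨(i, j), h⟩

/-- Every `n`-player `m`-action game admits a `k`-uniform distribution
on the action profiles that is an `ε`-coarse correlated equilibrium, for every
`ε ∈ (0,1)` and every integer `k > (2/ε²)(ln m + ln n)`. -/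
theorem stmt6 {n m : ℕ} (hn : 0 < n) (hm : 0 < m)
    (u : Fin n → (Fin n → Fin m) → ℝ)
    (hu : ∀ i a, 0 ≤ u i a ∧ u i a ≤ 1)
    (ε : ℝ) (hε : 0 < ε ∧ ε < 1)
    (k : ℕ) (hk : (k : ℝ) > 2 / ε ^ 2 * (Real.log m + Real.log n)) :
    ∃ x : (Fin n → Fin m) → ℝ, IsDist x ∧ IsKUniform k x ∧ IsCCE u x ε :=
  stmt6_general hm u hu ε hε k hk
end
end
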